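/- arXiv:2503.15747 — 7 statements merged into one kernel-verified Lean document; each statement's English description precedes it below -/
import Mathlib

section
/- The k-subdivided claw S_k (the graph obtained from K_{1,3} by replacing each edge with a path of length k) has path eccentricity exactly k. -/
/-!
The path consisting of the center alone has eccentricity `k`. Conversely, the center is a cut
vertex that a path visits at most once, so every path meets at most two of the three arms.
The depth of a vertex in the missed arm changes by at most one along an edge and vanishes
on the path, so the leaf of that arm is at distance at least `k` from every vertex of the path.
-/

open SimpleGraph

/-- The `k`-subdivided claw `S_k`: a center vertex (`none`) with three pendant
paths of length `k` attached. Vertex `some (i, j)` is the `(j+1)`-st vertex on arm `i`. -/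
def subClaw (k : ℕ) : SimpleGraph (Option (Fin 3 × Fin k)) :=
  SimpleGraph.fromRel fun a b =>
    match a, b with
    | none, some p => (p.2 : ℕ) = 0
    | some p, some q => p.1 = q.1 ∧ (q.2 : ℕ) = (p.2 : ℕ) + 1
    | _, _ => False

/-- The `k`-subdivided net `T_k`: a triangle on the vertices `(i, 0)` with a pendant
path of length `k` attached to each triangle vertex. -/
def subNet (k : ℕ) : SimpleGraph (Fin 3 × Fin (k + 1)) :=
  SimpleGraph.fromRel fun a b =>
    ((a.2 : ℕ) = 0 ∧ (b.2 : ℕ) = 0 ∧ a.1 ≠ b.1) ∨ (a.1 = b.1 ∧ (b.2 : ℕ) = (a.2 : ℕ) + 1)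

/-- `3P_k`: the disjoint union of three paths on `k` vertices. -/
def threePath (k : ℕ) : SimpleGraph (Fin 3 × Fin k) :=
  SimpleGraph.fromRel fun a b => a.1 = b.1 ∧ (b.2 : ℕ) = (a.2 : ℕ) + 1

/-- Disjoint union of two simple graphs. -/
def disjSum {α β : Type*} (G : SimpleGraph α) (H : SimpleGraph β) : SimpleGraph (α ⊕ β) :=
  SimpleGraph.fromRel fun a b =>
    match a, b with
    | Sum.inl x, Sum.inl y => G.Adj x y
    | Sum.inr x, Sum.inr y => H.Adj x y
    | _, _ => False

/-- `H` is (isomorphic to) an induced subgraph of `G`. -/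
def IsInducedSubgraph {α β : Type*} (H : SimpleGraph α) (G : SimpleGraph β) : Prop :=
  Nonempty (H ↪g G)

/-- `G` is `{S_k, T_k}`-free. -/
def SkTkFree {V : Type*} (k : ℕ) (G : SimpleGraph V) : Prop :=
  ¬ IsInducedSubgraph (subClaw k) G ∧ ¬ IsInducedSubgraph (subNet k) G

/-- `G` has a path of eccentricity at most `k`. -/
def HasPathEccLE {V : Type*} (G : SimpleGraph V) (k : ℕ) : Prop :=
  ∃ (u v : V) (p : G.Walk u v), p.IsPath ∧ ∀ x : V, ∃ y ∈ p.support, G.dist x y ≤ k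

namespace SimpleGraph

variable {V α : Type*} {G : SimpleGraph V}

theorem Walk.le_add_length_of_adj {f : V → ℕ} (hf : ∀ ⦃a b⦄, G.Adj a b → f a ≤ f b + 1)
    {u v : V} (w : G.Walk u v) : f u ≤ f v + w.length := by
  induction w with
  | nil => simp
  | cons h w ih =>
    have := hf h
    rw [Walk.length_cons]
    omega

theorem Reachable.le_add_dist_of_adj {f : V → ℕ} (hf : ∀ ⦃a b⦄, G.Adj a b → f a ≤ f b + 1)
    {u v : V} (h : G.Reachable u v) : f u ≤ f v + G.dist u v := by
  obtain ⟨w, hw⟩ := h.exists_walk_length_eq_dist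
  exact hw ▸ w.le_add_length_of_adj hf

section CutVertex

variable {f : V → α} {c : V}

theorem Walk.apply_eq_of_notMem_support
    (hf : ∀ ⦃a b⦄, G.Adj a b → a ≠ c → b ≠ c → f a = f b) {u v : V} (w : G.Walk u v)
    (hc : c ∉ w.support) {y : V} (hy : y ∈ w.support) : f y = f u := by
  induction w with
  | nil => simp_all
  | cons h w ih =>
    simp only [Walk.support_cons, List.mem_cons, not_or] at hc hy
    rcases hy with rfl | hy
    · rfl
    · rw [ih hc.2 hy]
      exact (hf h (Ne.symm hc.1) fun hw => hc.2 (hw ▸ w.start_mem_support)).symm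

theorem Walk.IsPath.eq_or_apply_eq_getVert_one
    (hf : ∀ ⦃a b⦄, G.Adj a b → a ≠ c → b ≠ c → f a = f b) {v : V} {w : G.Walk c v}
    (hw : w.IsPath) {y : V} (hy : y ∈ w.support) : y = c ∨ f y = f (w.getVert 1) := by
  cases w with
  | nil => simp_all
  | cons h w =>
    rw [Walk.cons_isPath_iff] at hw
    rw [Walk.support_cons, List.mem_cons] at hy
    rcases hy with rfl | hy
    · exact Or.inl rfl
    · simpa using Or.inr (w.apply_eq_of_notMem_support hf hw.2 hy)

-- A path visits `c` at most once and is cut there into two paths starting at `c`.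
theorem Walk.IsPath.exists_apply_eq_or_apply_eq [DecidableEq V]
    (hf : ∀ ⦃a b⦄, G.Adj a b → a ≠ c → b ≠ c → f a = f b) {u v : V} {p : G.Walk u v}
    (hp : p.IsPath) : ∃ a b, ∀ y ∈ p.support, y = c ∨ f y = f a ∨ f y = f b := by
  by_cases hcp : c ∈ p.support
  · set q₁ := p.takeUntil c hcp
    set q₂ := p.dropUntil c hcp
    refine ⟨q₁.reverse.getVert 1, q₂.getVert 1, fun y hy => ?_⟩
    rw [← p.take_spec hcp, Walk.mem_support_append_iff] at hy
    rcases hy with hy | hy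
    · rw [← List.mem_reverse, ← Walk.support_reverse] at hy
      exact ((hp.takeUntil hcp).reverse.eq_or_apply_eq_getVert_one hf hy).imp_right Or.inl
    · exact ((hp.dropUntil hcp).eq_or_apply_eq_getVert_one hf hy).imp_right Or.inr
  · exact ⟨u, u, fun y hy => Or.inr (Or.inl (p.apply_eq_of_notMem_support hf hcp hy))⟩

end CutVertex

end SimpleGraph

namespace subClaw

variable {k : ℕ}

theorem adj_none_some {i : Fin 3} {j : Fin k} :
    (subClaw k).Adj none (some (i, j)) ↔ (j : ℕ) = 0 := by
  simp [subClaw]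

theorem adj_some_some {i i' : Fin 3} {j j' : Fin k} :
    (subClaw k).Adj (some (i, j)) (some (i', j')) ↔
      i = i' ∧ ((j' : ℕ) = j + 1 ∨ (j : ℕ) = j' + 1) := by
  simp only [subClaw, fromRel_adj, ne_eq, Option.some.injEq, Prod.mk.injEq]
  constructor
  · rintro ⟨-, ⟨rfl, h⟩ | ⟨rfl, h⟩⟩ <;> simp [h]
  · rintro ⟨rfl, h | h⟩ <;> refine ⟨fun h' => ?_, by simp [h]⟩ <;> simp [h'.2] at h

theorem exists_walk_some_none (i : Fin 3) (j : ℕ) (hj : j < k) :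
    ∃ w : (subClaw k).Walk (some (i, ⟨j, hj⟩)) none, w.length = j + 1 := by
  induction j with
  | zero => exact ⟨Walk.cons (adj_none_some.2 rfl).symm .nil, rfl⟩
  | succ j ih =>
    obtain ⟨w, hw⟩ := ih (by omega)
    exact ⟨.cons (adj_some_some.2 ⟨rfl, Or.inr rfl⟩) w, by simp [hw]⟩

theorem reachable_none (y : Option (Fin 3 × Fin k)) : (subClaw k).Reachable y none := by
  rcases y with - | ⟨i, j, hj⟩
  · rfl
  · exact (exists_walk_some_none i j hj).elim fun w _ => ⟨w⟩

theorem dist_none_le (y : Option (Fin 3 × Fin k)) : (subClaw k).dist y none ≤ k := by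
  rcases y with - | ⟨i, j, hj⟩
  · simp
  · obtain ⟨w, hw⟩ := exists_walk_some_none i j hj
    exact (dist_le w).trans (hw ▸ hj)

def arm : Option (Fin 3 × Fin k) → Option (Fin 3) := Option.map Prod.fst

theorem arm_eq_of_adj ⦃a b : Option (Fin 3 × Fin k)⦄ (h : (subClaw k).Adj a b)
    (ha : a ≠ none) (hb : b ≠ none) : arm a = arm b := by
  rcases a with - | ⟨i, j⟩ <;> rcases b with - | ⟨i', j'⟩
  all_goals first | contradiction | exact congrArg some (adj_some_some.1 h).1

theorem exists_arm_notMem_support {u v : Option (Fin 3 × Fin k)} {p : (subClaw k).Walk u v}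
    (hp : p.IsPath) : ∃ i : Fin 3, ∀ y ∈ p.support, arm y ≠ some i := by
  obtain ⟨a, b, hab⟩ := hp.exists_apply_eq_or_apply_eq arm_eq_of_adj
  have third : ∀ x y : Option (Fin 3), ∃ i : Fin 3, some i ≠ x ∧ some i ≠ y := by decide
  obtain ⟨i, ha, hb⟩ := third (arm a) (arm b)
  refine ⟨i, fun y hy => ?_⟩
  rcases hab y hy with rfl | h | h
  · simp [arm]
  · exact h ▸ ha.symm
  · exact h ▸ hb.symm

def depth (i : Fin 3) : Option (Fin 3 × Fin k) → ℕ
  | some (i', j) => if i' = i then j + 1 else 0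
  | none => 0

theorem depth_eq_zero {i : Fin 3} {y : Option (Fin 3 × Fin k)} (hy : arm y ≠ some i) :
    depth i y = 0 := by
  rcases y with - | ⟨i', j⟩
  · rfl
  · simpa [depth, arm] using hy

theorem depth_le_of_adj (i : Fin 3) ⦃a b : Option (Fin 3 × Fin k)⦄ (h : (subClaw k).Adj a b) :
    depth i a ≤ depth i b + 1 := by
  rcases a with - | ⟨i₁, j₁⟩ <;> rcases b with - | ⟨i₂, j₂⟩
  · simp [depth]
  · simp [depth]
  · rw [(subClaw k).adj_comm, adj_none_some] at h
    simp only [depth]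
    split_ifs <;> omega
  · obtain ⟨rfl, h⟩ := adj_some_some.1 h
    simp only [depth]
    split_ifs <;> omega

end subClaw

open subClaw in
/-- The `k`-subdivided claw `S_k` has path eccentricity exactly `k`:
it has a path of eccentricity at most `k`, and every path has eccentricity at least `k`. -/
theorem stmt0 (k : ℕ) (hk : 1 ≤ k) :
    HasPathEccLE (subClaw k) k ∧
    ∀ (u v : Option (Fin 3 × Fin k)) (p : (subClaw k).Walk u v), p.IsPath →
      ∃ x, ∀ y ∈ p.support, k ≤ (subClaw k).dist x y := by
  refine ⟨⟨none, none, .nil, .nil, fun x => ⟨none, by simp, dist_none_le x⟩⟩, ?_⟩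
  intro u v p hp
  obtain ⟨i, hi⟩ := exists_arm_notMem_support hp
  let leaf : Option (Fin 3 × Fin k) := some (i, ⟨k - 1, by omega⟩)
  refine ⟨leaf, fun y hy => ?_⟩
  have hleaf : depth i leaf = k := by simp [leaf, depth]; omega
  have hdist := ((reachable_none leaf).trans (reachable_none y).symm).le_add_dist_of_adj
    (depth_le_of_adj i)
  rwa [hleaf, depth_eq_zero (hi y hy), zero_add] at hdist
end

section
/- The k-subdivided net T_k (the graph obtained by appending a pendant path of length k to each vertex of a triangle K_3) has path eccentricity exactly k. -/
open SimpleGraph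

/-!
The triangle itself is a path of eccentricity `k`: every vertex is within `k` of the base of
its arm. Conversely, a path ends on at most two arms, so some arm `i` contains neither end.
The base `(i, 0)` is the only way into the rest of arm `i`, and a path entering it would have
to leave through the base again, so the path avoids arm `i` except possibly its base. The tip
`(i, k)` is then at distance at least `k` from the path.
-/

namespace SimpleGraph

variable {V : Type*} {G : SimpleGraph V}

theorem Walk.sub_le_length_of_adj (f : V → ℤ) (hf : ∀ a b, G.Adj a b → f a - f b ≤ 1)
    {u v : V} (w : G.Walk u v) : f u - f v ≤ w.length := by
  induction w with
  | nil => simp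
  | cons h _ ih =>
    have := hf _ _ h
    rw [Walk.length_cons]
    push_cast
    omega

theorem Reachable.sub_le_dist_of_adj (f : V → ℤ) (hf : ∀ a b, G.Adj a b → f a - f b ≤ 1)
    {u v : V} (huv : G.Reachable u v) : f u - f v ≤ G.dist u v := by
  obtain ⟨w, hw⟩ := huv.exists_walk_length_eq_dist
  rw [← hw]
  exact w.sub_le_length_of_adj f hf

def IsGate (G : SimpleGraph V) (S : Set V) (c : V) : Prop :=
  ∀ x y, x ∈ S → y ∉ S → G.Adj y x → y = c

theorem Walk.gate_mem_support {S : Set V} {c : V} (hS : G.IsGate S c) {u v : V}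
    (w : G.Walk u v) (hu : u ∉ S) (hv : v ∈ S) : c ∈ w.support := by
  induction w with
  | nil => exact absurd hv hu
  | @cons a b _ h w ih =>
    rw [Walk.support_cons, List.mem_cons]
    by_cases hb : b ∈ S
    · exact .inl (hS b a hb hu h).symm
    · exact .inr (ih hb hv)

theorem Walk.IsPath.notMem_of_gate {S : Set V} {c : V} (hS : G.IsGate S c) (hc : c ∉ S)
    {u v : V} {p : G.Walk u v} (hp : p.IsPath) (hu : u ∉ S) (hv : v ∉ S) :
    ∀ y ∈ p.support, y ∉ S := by
  intro y hy hyS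
  obtain ⟨q, r, rfl⟩ := Walk.mem_support_iff_exists_append.mp hy
  have hcq : c ∈ q.support := q.gate_mem_support hS hu hyS
  have hcr : c ∈ r.support.tail := by
    have := r.reverse.gate_mem_support hS hv hyS
    rw [Walk.support_reverse, List.mem_reverse, ← Walk.cons_tail_support, List.mem_cons] at this
    exact this.resolve_left fun hcy => hc (hcy ▸ hyS)
  have hnd := hp.support_nodup
  rw [Walk.support_append] at hnd
  exact List.disjoint_of_nodup_append hnd hcq hcr

end SimpleGraph

section SubNet

variable {k : ℕ}

lemma subNet_adj {a b : Fin 3 × Fin (k + 1)} :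
    (subNet k).Adj a b ↔ a ≠ b ∧
      ((((a.2 : ℕ) = 0 ∧ (b.2 : ℕ) = 0 ∧ a.1 ≠ b.1) ∨ (a.1 = b.1 ∧ (b.2 : ℕ) = a.2 + 1)) ∨
       (((b.2 : ℕ) = 0 ∧ (a.2 : ℕ) = 0 ∧ b.1 ≠ a.1) ∨ (b.1 = a.1 ∧ (a.2 : ℕ) = b.2 + 1))) := by
  simp [subNet, fromRel_adj]

lemma subNet_adj_base {i j : Fin 3} (h : i ≠ j) : (subNet k).Adj (i, 0) (j, 0) :=
  subNet_adj.mpr ⟨by simp [h], .inl (.inl ⟨rfl, rfl, h⟩)⟩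

lemma subNet_exists_walk_to_base (i : Fin 3) :
    ∀ (j : ℕ) (hj : j < k + 1), ∃ w : (subNet k).Walk (i, ⟨j, hj⟩) (i, 0), w.length = j
  | 0, _ => ⟨.nil, rfl⟩
  | j + 1, hj => by
    obtain ⟨w, hw⟩ := subNet_exists_walk_to_base i j (by omega)
    have h : (subNet k).Adj (i, ⟨j + 1, hj⟩) (i, ⟨j, by omega⟩) :=
      subNet_adj.mpr ⟨by simp, .inr (.inr ⟨rfl, rfl⟩)⟩
    exact ⟨.cons h w, by simp [hw]⟩

lemma subNet_dist_base_le (x : Fin 3 × Fin (k + 1)) : (subNet k).dist x (x.1, 0) ≤ x.2 := by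
  obtain ⟨w, hw⟩ := subNet_exists_walk_to_base x.1 x.2 x.2.isLt
  exact hw ▸ dist_le w

lemma subNet_reachable (a b : Fin 3 × Fin (k + 1)) : (subNet k).Reachable a b := by
  have hbase (x : Fin 3 × Fin (k + 1)) : (subNet k).Reachable x (x.1, 0) :=
    (subNet_exists_walk_to_base x.1 x.2 x.2.isLt).elim fun w _ => ⟨w⟩
  refine (hbase a).trans (Reachable.trans ?_ (hbase b).symm)
  by_cases h : a.1 = b.1
  · rw [h]
  · exact (subNet_adj_base h).reachable

def armInterior (i : Fin 3) : Set (Fin 3 × Fin (k + 1)) := {y | y.1 = i ∧ (y.2 : ℕ) ≠ 0}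

lemma isGate_armInterior (i : Fin 3) : (subNet k).IsGate (armInterior i) (i, 0) := by
  rintro ⟨xi, xj⟩ ⟨yi, yj⟩ ⟨rfl, hx⟩ hy hxy
  simp only [armInterior, Set.mem_ofPred_eq, not_and, not_not] at hy
  rcases subNet_adj.mp hxy with ⟨-, (⟨-, h, -⟩ | ⟨h, -⟩) | (⟨h, -, -⟩ | ⟨h, h'⟩)⟩
  · exact absurd h hx
  · exact Prod.ext h (Fin.ext (hy h))
  · exact absurd h hx
  · exact absurd (hy h.symm) (by simp only at h'; omega)

/-- Position along arm `i`, continued as `-1 - j` on the other arms: it drops by at most one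
along every edge, so its differences bound distances from below. -/
def armPotential (i : Fin 3) (a : Fin 3 × Fin (k + 1)) : ℤ :=
  if a.1 = i then (a.2 : ℕ) else -1 - (a.2 : ℕ)

lemma armPotential_sub_le_one (i : Fin 3) (a b : Fin 3 × Fin (k + 1))
    (h : (subNet k).Adj a b) : armPotential i a - armPotential i b ≤ 1 := by
  obtain ⟨-, h⟩ := subNet_adj.mp h
  unfold armPotential
  rcases h with (h | h) | (h | h) <;>
    split_ifs <;> simp_all

lemma le_dist_tip_of_notMem_armInterior (i : Fin 3) {y : Fin 3 × Fin (k + 1)}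
    (hy : y ∉ armInterior i) : k ≤ (subNet k).dist (i, Fin.last k) y := by
  have hpot : (k : ℤ) ≤ armPotential i (i, Fin.last k) - armPotential i y := by
    simp only [armInterior, Set.mem_ofPred_eq, not_and, not_not] at hy
    unfold armPotential
    by_cases h : y.1 = i
    · simp [h, hy h]
    · simp only [h, if_true, if_false, Fin.val_last]
      omega
  have := (subNet_reachable (i, Fin.last k) y).sub_le_dist_of_adj _
    (armPotential_sub_le_one i)
  omega

end SubNet

theorem stmt1_general (k : ℕ) :
    HasPathEccLE (subNet k) k ∧
    ∀ (u v : Fin 3 × Fin (k + 1)) (p : (subNet k).Walk u v), p.IsPath →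
      ∃ x, ∀ y ∈ p.support, k ≤ (subNet k).dist x y := by
  refine ⟨?_, fun u v p hp => ?_⟩
  · let triangle : (subNet k).Walk (0, 0) (1, 0) :=
      .cons (subNet_adj_base (by decide : (0 : Fin 3) ≠ 2))
        (.cons (subNet_adj_base (by decide : (2 : Fin 3) ≠ 1)) .nil)
    refine ⟨_, _, triangle, by simp [triangle, Walk.isPath_def], fun x => ⟨(x.1, 0), ?_, ?_⟩⟩
    · obtain ⟨i, j⟩ := x
      fin_cases i <;> simp [triangle]
    · exact (subNet_dist_base_le x).trans (Nat.lt_succ_iff.mp x.2.isLt)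
  · obtain ⟨i, hiu, hiv⟩ : ∃ i : Fin 3, i ≠ u.1 ∧ i ≠ v.1 := by
      generalize u.1 = a; generalize v.1 = b; revert a b; decide
    have hout (x : Fin 3 × Fin (k + 1)) (hx : x.1 ≠ i) : x ∉ armInterior i := fun h => hx h.1
    refine ⟨(i, Fin.last k), fun y hy => le_dist_tip_of_notMem_armInterior i ?_⟩
    exact hp.notMem_of_gate (isGate_armInterior i) (by simp [armInterior]) (hout u hiu.symm)
      (hout v hiv.symm) y hy

/-- The `k`-subdivided net `T_k` has path eccentricity exactly `k`:
it has a path of eccentricity at most `k`, and every path has eccentricity at least `k`. -/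
theorem stmt1 (k : ℕ) (hk : 1 ≤ k) :
    HasPathEccLE (subNet k) k ∧
    ∀ (u v : Fin 3 × Fin (k + 1)) (p : (subNet k).Walk u v), p.IsPath →
      ∃ x, ∀ y ∈ p.support, k ≤ (subNet k).dist x y :=
  stmt1_general k
end

section
/- Every connected 3P_2-free graph has a longest path that is dominating (every vertex of the graph is in the path or adjacent to a vertex of the path). -/
open SimpleGraph

/-!
Take a longest path `P = v₁ ⋯ v_N` whose closed neighbourhood is as large as possible among
longest paths. If `P` is not dominating, connectivity gives an undominated vertex `c` with a
neighbour `a ∉ P` that is adjacent to some `b ∈ P`. Maximality forbids `a` from touching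
`v₁, v₂, v_{N-1}, v_N`, so `b` sits strictly inside. A chord between `{v₁, v₂}` and
`{v_{N-1}, v_N}` closes a cycle through `b` that can be reopened at `b` and extended by `a`
(and `c`): the chords `v₁v_N`, `v₁v_{N-1}`, `v₂v_N` give a longer path, and `v₂v_{N-1}` a path of
the same length whose closed neighbourhood gains `c` and loses nothing, since all neighbours of
the ends of `P` lie on `P`. So `ca`, `v₁v₂`, `v_{N-1}v_N` induce a `3P₂`.
-/

namespace SimpleGraph

variable {V : Type*} {G : SimpleGraph V}

variable (G) in
def IsPathList (l : List V) : Prop := l.IsChain G.Adj ∧ l.Nodup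

section

variable {l X Y : List V} {x y c a : V}

lemma IsPathList.cons (h : G.IsPathList l) (hx : x ∉ l) (hadj : ∀ y ∈ l.head?, G.Adj x y) :
    G.IsPathList (x :: l) :=
  ⟨h.1.cons hadj, List.nodup_cons.2 ⟨hx, h.2⟩⟩

lemma IsPathList.cons_cons (h : G.IsPathList l) (hc : c ∉ l) (ha : a ∉ l) (hca : G.Adj c a)
    (hab : ∀ b ∈ l.head?, G.Adj a b) : G.IsPathList (c :: a :: l) :=
  (h.cons ha hab).cons (by simp [hca.ne, hc]) (by simpa using hca)

lemma IsPathList.reverse (h : G.IsPathList l) : G.IsPathList l.reverse :=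
  ⟨List.isChain_reverse.2 (h.1.imp fun _ _ hxy => hxy.symm), List.nodup_reverse.2 h.2⟩

lemma IsPathList.infix (h : G.IsPathList l) (h' : X <:+: l) : G.IsPathList X :=
  ⟨h.1.infix h', h.2.sublist h'.sublist⟩

lemma IsPathList.adj_of_infix (h : G.IsPathList l) (h' : [x, y] <:+: l) : G.Adj x y := by
  simpa using (h.infix h').1

lemma IsPathList.rotate (h : G.IsPathList (X ++ Y))
    (hadj : ∀ x ∈ Y.getLast?, ∀ y ∈ X.head?, G.Adj x y) : G.IsPathList (Y ++ X) :=
  ⟨h.1.right_of_append.append h.1.left_of_append hadj, List.nodup_append_comm.1 h.2⟩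

lemma IsPathList.exists_walk (h : G.IsPathList l) (hne : l ≠ []) :
    ∃ (u v : V) (p : G.Walk u v), p.IsPath ∧ p.support = l :=
  ⟨_, _, Walk.ofSupport l hne h.1, by rw [Walk.isPath_def, Walk.support_ofSupport]; exact h.2,
    Walk.support_ofSupport _ _⟩

end

lemma Walk.IsPath.isPathList_support {u v : V} {p : G.Walk u v} (hp : p.IsPath) :
    G.IsPathList p.support :=
  ⟨p.isChain_adj_support, hp.support_nodup⟩

variable (G) in
def closedNbhd (l : List V) : Set V := {x | x ∈ l ∨ ∃ y ∈ l, G.Adj x y}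

lemma closedNbhd_subset_closedNbhd {l m : List V} (hmem : ∀ y ∈ l, y ∈ G.closedNbhd m)
    (hnbr : ∀ y ∈ l, y ∉ m → ∀ x, G.Adj x y → x ∈ l) : G.closedNbhd l ⊆ G.closedNbhd m := by
  rintro x (hx | ⟨y, hy, hxy⟩)
  · exact hmem x hx
  · by_cases hym : y ∈ m
    · exact Or.inr ⟨y, hym, hxy⟩
    · exact hmem x (hnbr y hy hym x hxy)

variable (G) in
structure IsLongestPathList (l : List V) : Prop where
  isPathList : G.IsPathList l
  length_le : ∀ m, G.IsPathList m → m.length ≤ l.length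

variable (G) in
structure IsOptimalPathList (l : List V) : Prop extends G.IsLongestPathList l where
  ncard_le : ∀ m, G.IsPathList m → m.length = l.length →
    (G.closedNbhd m).ncard ≤ (G.closedNbhd l).ncard

lemma exists_isOptimalPathList [Finite V] : ∃ l, G.IsOptimalPathList l := by
  have := Fintype.ofFinite V
  have hfin : {l : List V | G.IsPathList l}.Finite :=
    (List.finite_length_le V (Fintype.card V)).subset fun l hl => hl.2.length_le_card
  obtain ⟨l, hl, hmax⟩ := Set.exists_max_image _
    (fun l => toLex (l.length, (G.closedNbhd l).ncard)) hfin ⟨[], by simp [IsPathList]⟩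
  refine ⟨l, ⟨hl, fun m hm => ?_⟩, fun m hm hlen => ?_⟩ <;>
    have := hmax m hm <;> simp only [Prod.Lex.toLex_le_toLex] at this <;> omega

lemma threePath_two_adj_iff {p q : Fin 3 × Fin 2} :
    (threePath 2).Adj p q ↔ p.1 = q.1 ∧ p.2 ≠ q.2 := by
  rw [threePath, fromRel_adj]
  revert p q
  decide

lemma isInducedSubgraph_threePath_two {a₁ b₁ a₂ b₂ a₃ b₃ : V}
    (h₁ : G.Adj a₁ b₁) (h₂ : G.Adj a₂ b₂) (h₃ : G.Adj a₃ b₃)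
    (h₁₂ : ∀ u ∈ [a₁, b₁], ∀ w ∈ [a₂, b₂], ¬ G.Adj u w)
    (h₁₃ : ∀ u ∈ [a₁, b₁], ∀ w ∈ [a₃, b₃], ¬ G.Adj u w)
    (h₂₃ : ∀ u ∈ [a₂, b₂], ∀ w ∈ [a₃, b₃], ¬ G.Adj u w) :
    IsInducedSubgraph (threePath 2) G := by
  let f : Fin 3 × Fin 2 → V := fun p => ![![a₁, b₁], ![a₂, b₂], ![a₃, b₃]] p.1 p.2
  have hf : ∀ p q, G.Adj (f p) (f q) ↔ (threePath 2).Adj p q := by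
    simp only [List.mem_cons, List.not_mem_nil, or_false, forall_eq_or_imp, forall_eq]
      at h₁₂ h₁₃ h₂₃
    intro p q
    rw [threePath_two_adj_iff]
    fin_cases p <;> fin_cases q <;>
      simp [f, h₁, h₂, h₃, h₁.symm, h₂.symm, h₃.symm, h₁₂, h₁₃, h₂₃, G.adj_comm]
  have hpartner : ∀ p q : Fin 3 × Fin 2, (threePath 2).Adj (p.1, p.2 + 1) q → q = p := by
    simp only [threePath_two_adj_iff]
    decide
  have hinj : Function.Injective f := fun p q hpq =>
    (hpartner p q ((hf _ q).1 (hpq ▸ (hf _ p).2 (by simp [threePath_two_adj_iff])))).symm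
  exact ⟨⟨⟨f, hinj⟩, hf _ _⟩⟩

section Longest

variable {l A R X Y : List V} {a b c v v₁ v₂ w₁ w₂ y : V}

lemma IsLongestPathList.reverse (hl : G.IsLongestPathList l) : G.IsLongestPathList l.reverse :=
  ⟨hl.isPathList.reverse, by simpa using hl.length_le⟩

lemma IsLongestPathList.ne_nil [Nonempty V] (hl : G.IsLongestPathList l) : l ≠ [] := by
  rintro rfl
  simpa using hl.length_le [Classical.arbitrary V] (by simp [IsPathList])

lemma IsLongestPathList.not_adj_head (hl : G.IsLongestPathList l) (h : l.head? = some v)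
    (hy : y ∉ l) : ¬ G.Adj y v := fun hyv => by
  simpa using hl.length_le _ (hl.isPathList.cons hy (by simpa [h] using hyv))

lemma IsLongestPathList.not_adj_second (hl : G.IsLongestPathList l) (h : l.tail.head? = some v)
    (hc : c ∉ l) (ha : a ∉ l) (hca : G.Adj c a) : ¬ G.Adj a v := fun hav => by
  have hpath : G.IsPathList (c :: a :: l.tail) :=
    (hl.isPathList.infix l.tail_suffix.isInfix).cons_cons (mt List.mem_of_mem_tail hc)
      (mt List.mem_of_mem_tail ha) hca (by simpa [h] using hav)
  have hne : l ≠ [] := by rintro rfl; simp at h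
  have := hl.length_le _ hpath
  simp only [List.length_cons, List.length_tail] at this
  have := List.length_pos_of_ne_nil hne
  omega

lemma IsLongestPathList.two_le_length (hl : G.IsLongestPathList l) (h : l = A ++ b :: R)
    (hc : c ∉ l) (ha : a ∉ l) (hca : G.Adj c a) (hab : G.Adj a b) : 2 ≤ A.length := by
  rcases A with _ | ⟨v, _ | ⟨v', A⟩⟩
  · exact absurd hab (hl.not_adj_head (by simp [h]) ha)
  · exact absurd hab (hl.not_adj_second (by simp [h]) hc ha hca)
  · simp

lemma IsLongestPathList.not_adj_last_head (hl : G.IsLongestPathList l)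
    (h : l = v₁ :: X ++ b :: (Y ++ [w₁])) (ha : a ∉ l) (hab : G.Adj a b) : ¬ G.Adj w₁ v₁ :=
  fun hwv => by
  subst h
  have hpath : G.IsPathList (a :: (b :: (Y ++ [w₁]) ++ v₁ :: X)) :=
    (hl.isPathList.rotate (by simp [List.getLast?_cons, hwv])).cons (by simp_all)
      (by simpa using hab)
  have := hl.length_le _ hpath
  simp at this
  omega

lemma IsLongestPathList.not_adj_penultimate_head (hl : G.IsLongestPathList l)
    (h : l = v₁ :: X ++ b :: (Y ++ [w₂, w₁])) (hc : c ∉ l) (ha : a ∉ l) (hca : G.Adj c a)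
    (hab : G.Adj a b) : ¬ G.Adj w₂ v₁ := fun hwv => by
  subst h
  have hprefix : v₁ :: X ++ b :: (Y ++ [w₂]) <:+: v₁ :: X ++ b :: (Y ++ [w₂, w₁]) :=
    ⟨[], [w₁], by simp⟩
  have hpath : G.IsPathList (c :: a :: (b :: (Y ++ [w₂]) ++ v₁ :: X)) :=
    ((hl.isPathList.infix hprefix).rotate (by simp [List.getLast?_cons, hwv])).cons_cons
      (by simp_all) (by simp_all) hca (by simpa using hab)
  have := hl.length_le _ hpath
  simp at this
  omega

end Longest

lemma IsOptimalPathList.not_adj_penultimate_second [Finite V] {l X Y : List V}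
    {a b c v₁ v₂ w₁ w₂ : V}
    (hl : G.IsOptimalPathList l) (h : l = v₁ :: v₂ :: X ++ b :: (Y ++ [w₂, w₁]))
    (hc : c ∉ G.closedNbhd l) (ha : a ∉ l) (hca : G.Adj c a) (hab : G.Adj a b) :
    ¬ G.Adj w₂ v₂ := fun hwv => by
  have hmid : v₂ :: X ++ [b] ++ (Y ++ [w₂]) <:+: l := ⟨[v₁], [w₁], by simp [h]⟩
  -- `Q = c a b ⋯ v₂ w₂ ⋯` loses only the ends `v₁, w₁`, which `v₂, w₂` still dominate.
  set Q := c :: a :: (Y ++ [w₂] ++ (v₂ :: X ++ [b])).reverse with hQ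
  have hpath : G.IsPathList Q :=
    ((hl.isPathList.infix hmid).rotate (by simp [hwv])).reverse.cons_cons
      (by simp_all [closedNbhd]) (by simp_all) hca (by simpa using hab)
  have hlen : Q.length = l.length := by simp [hQ, h]; omega
  have h₁₂ : G.Adj v₁ v₂ :=
    hl.isPathList.adj_of_infix ⟨[], X ++ b :: (Y ++ [w₂, w₁]), by simp [h]⟩
  have h₂₁ : G.Adj w₂ w₁ :=
    hl.isPathList.adj_of_infix ⟨v₁ :: v₂ :: X ++ b :: Y, [], by simp [h]⟩
  have hsub : G.closedNbhd l ⊆ G.closedNbhd Q := by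
    refine closedNbhd_subset_closedNbhd (fun y hy => ?_) (fun y hy hyQ x hxy => ?_)
    · by_cases hy₁ : y = v₁
      · exact Or.inr ⟨v₂, by simp [hQ], hy₁ ▸ h₁₂⟩
      by_cases hy₂ : y = w₁
      · exact Or.inr ⟨w₂, by simp [hQ], hy₂ ▸ h₂₁.symm⟩
      simp only [h, List.cons_append, List.mem_cons, List.mem_append] at hy
      exact Or.inl (by simp [hQ]; tauto)
    · have hend : y = v₁ ∨ y = w₁ := by
        simp only [h, hQ, List.cons_append, List.mem_cons, List.mem_append, List.mem_reverse]
          at hy hyQ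
        tauto
      by_contra hx
      rcases hend with rfl | rfl
      · exact hl.not_adj_head (by simp [h]) hx hxy
      · exact hl.reverse.not_adj_head (by simp [h]) (by simpa using hx) hxy
  have hlt :=
    Set.ncard_lt_ncard ((Set.ssubset_iff_of_subset hsub).2 ⟨c, Or.inl (by simp [hQ]), hc⟩)
  have := hl.ncard_le Q hpath hlen
  omega

lemma IsLongestPathList.exists_eq_of_adj_adj {l : List V} {a b c : V}
    (hl : G.IsLongestPathList l) (hb : b ∈ l) (hc : c ∉ l) (ha : a ∉ l) (hca : G.Adj c a)
    (hab : G.Adj a b) : ∃ v₁ v₂ X Y w₂ w₁, l = v₁ :: v₂ :: X ++ b :: (Y ++ [w₂, w₁]) := by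
  obtain ⟨A, R, h⟩ := List.append_of_mem hb
  have hA := hl.two_le_length h hc ha hca hab
  have hR := hl.reverse.two_le_length (A := R.reverse) (R := A.reverse) (by simp [h])
    (by simpa) (by simpa) hca hab
  obtain ⟨v₁, v₂, X, rfl⟩ : ∃ v₁ v₂ X, A = v₁ :: v₂ :: X := by
    rcases A with _ | ⟨v₁, _ | ⟨v₂, X⟩⟩ <;> simp_all
  obtain ⟨w₁, w₂, Y, hY⟩ : ∃ w₁ w₂ Y, R.reverse = w₁ :: w₂ :: Y := by
    rcases hR' : R.reverse with _ | ⟨w₁, _ | ⟨w₂, Y⟩⟩ <;> rw [hR'] at hR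
    · simp at hR
    · simp at hR
    · exact ⟨w₁, w₂, Y, rfl⟩
  have hY' : R = Y.reverse ++ [w₂, w₁] := by simpa using congrArg List.reverse hY
  exact ⟨v₁, v₂, X, Y.reverse, w₂, w₁, by simp [h, hY']⟩

lemma Connected.exists_adj_adj_of_notMem_closedNbhd {l : List V} {x : V} (hconn : G.Connected)
    (hne : l ≠ []) (hx : x ∉ G.closedNbhd l) :
    ∃ c a b, c ∉ G.closedNbhd l ∧ a ∉ l ∧ b ∈ l ∧ G.Adj c a ∧ G.Adj a b := by
  obtain ⟨z, hz⟩ := List.exists_mem_of_ne_nil l hne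
  obtain ⟨d, -, hd₁, hd₂⟩ :=
    (hconn x z).some.exists_boundary_dart (G.closedNbhd l)ᶜ hx (by simp [closedNbhd, hz])
  simp only [Set.mem_compl_iff, not_not] at hd₁ hd₂
  rcases hd₂ with ha | ⟨b, hb, hab⟩
  · exact absurd (Or.inr ⟨d.snd, ha, d.adj⟩) hd₁
  · exact ⟨d.fst, d.snd, b, hd₁, fun ha => hd₁ (Or.inr ⟨_, ha, d.adj⟩), hb, d.adj, hab⟩

lemma IsOptimalPathList.mem_closedNbhd [Finite V] {l : List V} (hl : G.IsOptimalPathList l)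
    (hconn : G.Connected) (hfree : ¬ IsInducedSubgraph (threePath 2) G) (x : V) :
    x ∈ G.closedNbhd l := by
  have := hconn.nonempty
  by_contra hx
  obtain ⟨c, a, b, hc, ha, hb, hca, hab⟩ :=
    hconn.exists_adj_adj_of_notMem_closedNbhd hl.ne_nil hx
  have hcl : ∀ v ∈ l, ¬ G.Adj c v := fun v hv hcv => hc (Or.inr ⟨v, hv, hcv⟩)
  have hc' : c ∉ l := fun hmem => hc (Or.inl hmem)
  obtain ⟨v₁, v₂, X, Y, w₂, w₁, h⟩ := hl.exists_eq_of_adj_adj hb hc' ha hca hab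
  have hrev : l.reverse = w₁ :: (w₂ :: Y.reverse) ++ b :: (X.reverse ++ [v₂, v₁]) := by simp [h]
  have h₁₂ : G.Adj v₁ v₂ :=
    hl.isPathList.adj_of_infix ⟨[], X ++ b :: (Y ++ [w₂, w₁]), by simp [h]⟩
  have h₂₁ : G.Adj w₂ w₁ :=
    hl.isPathList.adj_of_infix ⟨v₁ :: v₂ :: X ++ b :: Y, [], by simp [h]⟩
  refine hfree (isInducedSubgraph_threePath_two hca h₁₂ h₂₁ ?_ ?_ ?_)
  · have h₁ : ¬ G.Adj a v₁ := hl.not_adj_head (by simp [h]) ha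
    have h₂ : ¬ G.Adj a v₂ := hl.not_adj_second (by simp [h]) hc' ha hca
    simp_all
  · have h₁ : ¬ G.Adj a w₁ := hl.reverse.not_adj_head (by simp [h]) (by simpa using ha)
    have h₂ : ¬ G.Adj a w₂ :=
      hl.reverse.not_adj_second (by simp [h]) (by simpa using hc') (by simpa using ha) hca
    simp_all
  · have h₁ : ¬ G.Adj w₁ v₁ :=
      hl.not_adj_last_head (X := v₂ :: X) (Y := Y ++ [w₂]) (by simp [h]) ha hab
    have h₂ : ¬ G.Adj w₂ v₁ := hl.not_adj_penultimate_head (X := v₂ :: X) h hc' ha hca hab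
    have h₃ : ¬ G.Adj v₂ w₁ := hl.reverse.not_adj_penultimate_head (X := w₂ :: Y.reverse) hrev
      (by simpa using hc') (by simpa using ha) hca hab
    have h₄ : ¬ G.Adj w₂ v₂ := hl.not_adj_penultimate_second h hc ha hca hab
    simp_all [G.adj_comm]

end SimpleGraph

/-- Every connected `3P_2`-free graph has a longest path that is dominating. -/
theorem stmt11 {V : Type} [Fintype V] (G : SimpleGraph V) (hconn : G.Connected)
    (hfree : ¬ IsInducedSubgraph (threePath 2) G) :
    ∃ (u v : V) (p : G.Walk u v), p.IsPath ∧
      (∀ (a b : V) (q : G.Walk a b), q.IsPath → q.length ≤ p.length) ∧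
      (∀ x : V, x ∈ p.support ∨ ∃ y ∈ p.support, G.Adj x y) := by
  have := hconn.nonempty
  obtain ⟨l, hl⟩ := G.exists_isOptimalPathList
  obtain ⟨u, v, p, hp, rfl⟩ := hl.isPathList.exists_walk hl.ne_nil
  refine ⟨u, v, p, hp, fun a b q hq => ?_, hl.mem_closedNbhd hconn hfree⟩
  simpa using hl.length_le _ hq.isPathList_support
end

section
/- Let G be a connected graph, P a longest path in G with endpoints u, v, and suppose some vertex of G is at distance exactly 2 from P. Then neither endpoint of P has a neighbor outside P, and if u', v' denote the neighbors of u, v on P respectively, then for any vertex y outside P adjacent to an internal vertex of P but having a neighbor at distance 2 from P, y is nonadjacent to each of u, v, u', v'. -/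
open SimpleGraph

/-! Everything follows from the maximality of `P`: a neighbour of an endpoint outside `P` would
extend `P`, and if `y ∉ P` is adjacent to `u'` and has a neighbour `x ∉ P`, then `x y u' … v` is a
path one longer than `P`. -/

namespace SimpleGraph.Walk

variable {V : Type*} {G : SimpleGraph V} {u v : V}

def IsLongestPath (p : G.Walk u v) : Prop :=
  p.IsPath ∧ ∀ (a b : V) (q : G.Walk a b), q.IsPath → q.length ≤ p.length

theorem IsLongestPath.reverse {p : G.Walk u v} (hP : p.IsLongestPath) :
    p.reverse.IsLongestPath :=
  ⟨hP.1.reverse, fun a b q hq => by simpa only [length_reverse] using hP.2 a b q hq⟩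

theorem IsLongestPath.mem_support_of_adj_start {p : G.Walk u v} (hP : p.IsLongestPath)
    {w : V} (hw : G.Adj u w) : w ∈ p.support := by
  by_contra hwp
  have := hP.2 _ _ _ (hP.1.cons hwp : (cons hw.symm p).IsPath)
  simp only [length_cons] at this
  omega

theorem IsLongestPath.not_adj_second {p : G.Walk u v} (hP : p.IsLongestPath) {u' x y : V}
    (hu' : p.support[1]? = some u') (hxy : G.Adj x y) (hx : x ∉ p.support)
    (hy : y ∉ p.support) : ¬ G.Adj y u' := by
  cases p with
  | nil => simp at hu'
  | @cons _ w _ _ q =>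
    obtain rfl : w = u' := by
      rw [support_cons, ← q.cons_tail_support] at hu'
      simpa using hu'
    intro hyw
    have hyq : y ∉ q.support := fun h => hy (List.mem_cons_of_mem _ h)
    have hxq : x ∉ (cons hyw q).support := by
      simp only [support_cons, List.mem_cons, not_or] at hx ⊢
      exact ⟨hxy.ne, hx.2⟩
    -- Replacing the first vertex `u` by the two vertices `x, y` gives a longer path.
    have := hP.2 _ _ _ (((hP.1.of_cons).cons hyq).cons hxq : (cons hxy (cons hyw q)).IsPath)
    simp only [length_cons] at this
    omega

end SimpleGraph.Walk

theorem stmt12_general {V : Type} (G : SimpleGraph V)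
    (u v : V) (p : G.Walk u v) (hp : p.IsPath)
    (hlong : ∀ (a b : V) (q : G.Walk a b), q.IsPath → q.length ≤ p.length) :
    ((∀ w : V, G.Adj u w → w ∈ p.support) ∧ (∀ w : V, G.Adj v w → w ∈ p.support)) ∧
    ∀ u' v' : V, p.support[1]? = some u' → p.reverse.support[1]? = some v' →
      ∀ y : V, y ∉ p.support →
        (∃ w ∈ p.support, w ≠ u ∧ w ≠ v ∧ G.Adj y w) →
        (∃ x : V, G.Adj y x ∧ (∀ z ∈ p.support, 2 ≤ G.dist x z) ∧
          ∃ z ∈ p.support, G.dist x z = 2) →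
        ¬ G.Adj y u ∧ ¬ G.Adj y v ∧ ¬ G.Adj y u' ∧ ¬ G.Adj y v' := by
  have hP : p.IsLongestPath := ⟨hp, hlong⟩
  have hv : ∀ w : V, G.Adj v w → w ∈ p.support := fun w hw => by
    simpa only [Walk.support_reverse, List.mem_reverse] using hP.reverse.mem_support_of_adj_start hw
  refine ⟨⟨fun w => hP.mem_support_of_adj_start, hv⟩, ?_⟩
  rintro u' v' hu' hv' y hy - ⟨x, hyx, hxfar, -⟩
  have hx : x ∉ p.support := fun hxp => by simpa using hxfar x hxp
  have hrev : ∀ {z : V}, z ∉ p.support → z ∉ p.reverse.support := by simp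
  exact ⟨fun h => hy (hP.mem_support_of_adj_start h.symm), fun h => hy (hv y h.symm),
    hP.not_adj_second hu' hyx.symm hx hy, hP.reverse.not_adj_second hv' hyx.symm (hrev hx) (hrev hy)⟩

/-- If `P` is a longest path in a connected graph `G` with endpoints `u, v`, and some
vertex of `G` is at distance exactly `2` from `P`, then neither endpoint of `P` has a
neighbor outside `P`; moreover, if `u'`, `v'` are the neighbors of `u`, `v` along `P`,
then any vertex `y` outside `P` adjacent to an internal vertex of `P` and having a
neighbor at distance exactly `2` from `P` is nonadjacent to each of `u, v, u', v'`. -/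
theorem stmt12 {V : Type} (G : SimpleGraph V) (hconn : G.Connected)
    (u v : V) (p : G.Walk u v) (hp : p.IsPath)
    (hlong : ∀ (a b : V) (q : G.Walk a b), q.IsPath → q.length ≤ p.length)
    (hfar : ∃ z : V, (∀ y ∈ p.support, 2 ≤ G.dist z y) ∧ ∃ y ∈ p.support, G.dist z y = 2) :
    ((∀ w : V, G.Adj u w → w ∈ p.support) ∧ (∀ w : V, G.Adj v w → w ∈ p.support)) ∧
    ∀ u' v' : V, p.support[1]? = some u' → p.reverse.support[1]? = some v' →
      ∀ y : V, y ∉ p.support →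
        (∃ w ∈ p.support, w ≠ u ∧ w ≠ v ∧ G.Adj y w) →
        (∃ x : V, G.Adj y x ∧ (∀ z ∈ p.support, 2 ≤ G.dist x z) ∧
          ∃ z ∈ p.support, G.dist x z = 2) →
        ¬ G.Adj y u ∧ ¬ G.Adj y v ∧ ¬ G.Adj y u' ∧ ¬ G.Adj y v' :=
  stmt12_general G u v p hp hlong
end

section
/- If a graph G has a path P whose eccentricity is at most 1, then G has a spanning caterpillar; conversely, if G has a spanning caterpillar, then G has a path of eccentricity at most 1. -/
open SimpleGraph

/-!
A dominating path `P` of `G` spans an acyclic subgraph of the graph of edges of `G` meeting `P`,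
which is connected because `P` dominates. Extend `P` to a spanning tree of that graph: a vertex off
`P` has a tree neighbour, and every edge at such a vertex ends on `P`, so `P` still dominates the
tree. Conversely, a dominating path of a spanning subgraph dominates `G` itself.
-/

namespace SimpleGraph

variable {V : Type*} {G : SimpleGraph V}

theorem Walk.spanningCoe_toSubgraph_cons {u v w : V} (h : G.Adj u v) (q : G.Walk v w) :
    (Walk.cons h q).toSubgraph.spanningCoe = q.toSubgraph.spanningCoe ⊔ edge u v := by
  rw [Walk.toSubgraph, Subgraph.sup_spanningCoe, Subgraph.spanningCoe_subgraphOfAdj, sup_comm, edge]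

theorem Walk.IsPath.isAcyclic_spanningCoe_toSubgraph {u v : V} {p : G.Walk u v}
    (hp : p.IsPath) : p.toSubgraph.spanningCoe.IsAcyclic := by
  induction p with
  | nil => exact isAcyclic_bot
  | cons h q ih =>
    rw [Walk.cons_isPath_iff] at hp
    rw [Walk.spanningCoe_toSubgraph_cons]
    refine (ih hp.1).sup_edge_of_not_reachable fun ⟨w⟩ => hp.2 ?_
    exact Walk.mem_support_of_adj_toSubgraph (w.adj_snd (w.not_nil_of_ne h.ne))

def edgesMeeting (G : SimpleGraph V) (s : Set V) : SimpleGraph V where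
  Adj a b := G.Adj a b ∧ (a ∈ s ∨ b ∈ s)
  symm.symm _ _ h := ⟨h.1.symm, h.2.symm⟩
  loopless.irrefl _ h := h.1.ne rfl

theorem edgesMeeting_le (s : Set V) : G.edgesMeeting s ≤ G := fun _ _ h => h.1

theorem Walk.spanningCoe_toSubgraph_le_edgesMeeting {u v : V} (p : G.Walk u v) :
    p.toSubgraph.spanningCoe ≤ G.edgesMeeting {x | x ∈ p.support} :=
  fun _ _ h => ⟨p.toSubgraph.adj_sub h, .inl (Walk.mem_support_of_adj_toSubgraph h)⟩

theorem Walk.mem_edgeSet_of_spanningCoe_toSubgraph_le {H : SimpleGraph V} {u v : V}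
    {p : G.Walk u v} (h : p.toSubgraph.spanningCoe ≤ H) : ∀ e ∈ p.edges, e ∈ H.edgeSet := by
  intro e he
  apply edgeSet_mono h
  simpa using he

theorem Walk.connected_edgesMeeting_support {u v : V} (p : G.Walk u v)
    (hdom : ∀ x, x ∈ p.support ∨ ∃ y ∈ p.support, G.Adj x y) :
    (G.edgesMeeting {x | x ∈ p.support}).Connected := by
  classical
  have hp := mem_edgeSet_of_spanningCoe_toSubgraph_le p.spanningCoe_toSubgraph_le_edgesMeeting
  have hreach (x : V) (hx : x ∈ p.support) :
      (G.edgesMeeting {x | x ∈ p.support}).Reachable u x :=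
    ⟨(p.transfer _ hp).takeUntil x (by rwa [Walk.support_transfer])⟩
  refine (connected_iff_exists_forall_reachable _).2 ⟨u, fun x => ?_⟩
  obtain hx | ⟨y, hy, hxy⟩ := hdom x
  · exact hreach x hx
  · exact (hreach y hy).trans (Adj.reachable ⟨hxy.symm, .inl hy⟩)

theorem exists_adj_mem_of_le_edgesMeeting {T : SimpleGraph V} {s : Set V} (hT : T.Preconnected)
    (hle : T ≤ G.edgesMeeting s) {x y : V} (hy : y ∈ s) (hx : x ∉ s) :
    ∃ z ∈ s, T.Adj x z := by
  obtain ⟨w⟩ := hT x y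
  have hadj := w.adj_snd (w.not_nil_of_ne (ne_of_mem_of_not_mem hy hx).symm)
  exact ⟨_, (hle hadj).2.resolve_left hx, hadj⟩

end SimpleGraph

theorem stmt14_general {V : Type} (G : SimpleGraph V) :
    (∃ (u v : V) (p : G.Walk u v), p.IsPath ∧
        ∀ x : V, x ∈ p.support ∨ ∃ y ∈ p.support, G.Adj x y) ↔
      (∃ H : SimpleGraph V, H ≤ G ∧ H.IsTree ∧
        ∃ (u v : V) (p : H.Walk u v), p.IsPath ∧
          ∀ x : V, x ∈ p.support ∨ ∃ y ∈ p.support, H.Adj x y) := by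
  constructor
  · rintro ⟨u, v, p, hp, hdom⟩
    obtain ⟨T, hPT, hTG, hT⟩ :=
      (p.connected_edgesMeeting_support hdom).exists_isTree_le_of_le_of_isAcyclic
        p.spanningCoe_toSubgraph_le_edgesMeeting hp.isAcyclic_spanningCoe_toSubgraph
    have hpT := Walk.mem_edgeSet_of_spanningCoe_toSubgraph_le hPT
    refine ⟨T, hTG.trans (edgesMeeting_le _), hT, u, v, p.transfer T hpT, hp.transfer hpT,
      fun x => ?_⟩
    rw [Walk.support_transfer]
    by_cases hx : x ∈ p.support
    · exact .inl hx
    · exact .inr <| exists_adj_mem_of_le_edgesMeeting hT.connected.preconnected hTG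
        p.start_mem_support hx
  · rintro ⟨H, hHG, -, u, v, p, hp, hdom⟩
    refine ⟨u, v, p.mapLe hHG, hp.mapLe hHG, fun x => ?_⟩
    rw [Walk.support_mapLe_eq_support]
    exact (hdom x).imp_right fun ⟨y, hy, hxy⟩ => ⟨y, hy, hHG hxy⟩

/-- A connected graph has a path of eccentricity at most `1` (a dominating path)
iff it has a spanning caterpillar: a spanning subgraph that is a tree possessing a
dominating path. -/
theorem stmt14 {V : Type} (G : SimpleGraph V) (hconn : G.Connected) :
    (∃ (u v : V) (p : G.Walk u v), p.IsPath ∧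
        ∀ x : V, x ∈ p.support ∨ ∃ y ∈ p.support, G.Adj x y) ↔
      (∃ H : SimpleGraph V, H ≤ G ∧ H.IsTree ∧
        ∃ (u v : V) (p : H.Walk u v), p.IsPath ∧
          ∀ x : V, x ∈ p.support ∨ ∃ y ∈ p.support, H.Adj x y) :=
  stmt14_general G
end

section
/- If three intervals on a linearly ordered finite set pairwise intersect, then one of the three intervals is contained in the union of the other two. -/
open SimpleGraph

/-
Pick points `a ∈ A \ (B ∪ C)`, `b ∈ B \ (A ∪ C)`, `c ∈ C \ (A ∪ B)`. One of them lies between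
the other two, say `b` between `a` and `c`. Since `A` and `C` meet, `A ∪ C` is again an
interval, and it contains `a` and `c`, hence `b`: a contradiction.
-/

open Set

section LinearOrder

variable {α : Type*} [LinearOrder α]

theorem Set.OrdConnected.union_of_inter_nonempty {s t : Set α} (hs : s.OrdConnected)
    (ht : t.OrdConnected) (hst : (s ∩ t).Nonempty) : (s ∪ t).OrdConnected := by
  obtain ⟨r, hrs, hrt⟩ := hst
  refine ⟨fun x hx z hz y ⟨hxy, hyz⟩ => ?_⟩
  rcases le_total y r with hyr | hry
  · rcases hx with hx | hx
    · exact Or.inl (hs.out hx hrs ⟨hxy, hyr⟩)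
    · exact Or.inr (ht.out hx hrt ⟨hxy, hyr⟩)
  · rcases hz with hz | hz
    · exact Or.inl (hs.out hrs hz ⟨hry, hyz⟩)
    · exact Or.inr (ht.out hrt hz ⟨hry, hyz⟩)

theorem mem_uIcc_or_mem_uIcc_or_mem_uIcc (a b c : α) :
    b ∈ uIcc a c ∨ a ∈ uIcc b c ∨ c ∈ uIcc a b := by
  simp only [mem_uIcc]
  rcases le_total a b with hab | hab <;> rcases le_total b c with hbc | hbc <;>
    rcases le_total a c with hac | hac <;> tauto

end LinearOrder

theorem stmt16_general {α : Type} [LinearOrder α] (A B C : Set α)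
    (hA : ∀ x y z : α, x ≤ y → y ≤ z → x ∈ A → z ∈ A → y ∈ A)
    (hB : ∀ x y z : α, x ≤ y → y ≤ z → x ∈ B → z ∈ B → y ∈ B)
    (hC : ∀ x y z : α, x ≤ y → y ≤ z → x ∈ C → z ∈ C → y ∈ C)
    (hAB : (A ∩ B).Nonempty) (hBC : (B ∩ C).Nonempty) (hAC : (A ∩ C).Nonempty) :
    A ⊆ B ∪ C ∨ B ⊆ A ∪ C ∨ C ⊆ A ∪ B := by
  have ordConnected {s : Set α} (hs : ∀ x y z : α, x ≤ y → y ≤ z → x ∈ s → z ∈ s → y ∈ s) :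
      s.OrdConnected := ⟨fun x hx z hz y ⟨hxy, hyz⟩ => hs x y z hxy hyz hx hz⟩
  have hA' := ordConnected hA
  have hB' := ordConnected hB
  have hC' := ordConnected hC
  by_contra! h
  obtain ⟨⟨a, haA, ha⟩, ⟨b, hbB, hb⟩, ⟨c, hcC, hc⟩⟩ :=
    h.imp not_subset.mp (And.imp not_subset.mp not_subset.mp)
  rcases mem_uIcc_or_mem_uIcc_or_mem_uIcc a b c with h | h | h
  · exact hb ((hA'.union_of_inter_nonempty hC' hAC).uIcc_subset (.inl haA) (.inr hcC) h)
  · exact ha ((hB'.union_of_inter_nonempty hC' hBC).uIcc_subset (.inl hbB) (.inr hcC) h)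
  · exact hc ((hA'.union_of_inter_nonempty hB' hAB).uIcc_subset (.inl haA) (.inr hbB) h)

/-- If three intervals (order-convex sets) on a linearly ordered finite set pairwise
intersect, then one of them is contained in the union of the other two. -/
theorem stmt16 {α : Type} [LinearOrder α] [Fintype α] (A B C : Set α)
    (hA : ∀ x y z : α, x ≤ y → y ≤ z → x ∈ A → z ∈ A → y ∈ A)
    (hB : ∀ x y z : α, x ≤ y → y ≤ z → x ∈ B → z ∈ B → y ∈ B)
    (hC : ∀ x y z : α, x ≤ y → y ≤ z → x ∈ C → z ∈ C → y ∈ C)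
    (hAB : (A ∩ B).Nonempty) (hBC : (B ∩ C).Nonempty) (hAC : (A ∩ C).Nonempty) :
    A ⊆ B ∪ C ∨ B ⊆ A ∪ C ∨ C ⊆ A ∪ B :=
  stmt16_general A B C hA hB hC hAB hBC hAC
end

section
/- Let G be a graph and I an independent set in G with |I| = 3. If there exists a connected component C of G − I such that every vertex of I has a neighbor in C, then G[N[C]] contains an induced subgraph H belonging to the class S ∪ T ∪ M whose set of extremities is exactly I. -/
open SimpleGraph

/-- A graph in the class `𝓢` (subdivisions of `K_{1,3}`): a center vertex `none` with
three pendant paths, arm `i` having length `n i` (required to be `≥ 1`). -/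
def spiderS (n : Fin 3 → ℕ) : SimpleGraph (Option (Σ i : Fin 3, Fin (n i))) :=
  SimpleGraph.fromRel fun a b =>
    match a, b with
    | none, some p => (p.2 : ℕ) = 0
    | some p, some q => p.1 = q.1 ∧ (q.2 : ℕ) = (p.2 : ℕ) + 1
    | _, _ => False

/-- A graph in the class `𝓣`: a triangle on the vertices `⟨i, 0⟩` with a pendant
path of length `n i` (required to be `≥ 1`) attached to each triangle vertex. -/
def spiderT (n : Fin 3 → ℕ) : SimpleGraph (Σ i : Fin 3, Fin (n i + 1)) :=
  SimpleGraph.fromRel fun a b =>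
    ((a.2 : ℕ) = 0 ∧ (b.2 : ℕ) = 0 ∧ a.1 ≠ b.1) ∨ (a.1 = b.1 ∧ (b.2 : ℕ) = (a.2 : ℕ) + 1)

/-- A graph in the class `𝓜`: a path on `m` vertices `some 0, …, some (m-1)` together
with a center `none` adjacent exactly to the vertices of `A` (required to avoid the
endpoints of the path and to have at least two elements). -/
def centerPath (m : ℕ) (A : Finset (Fin m)) : SimpleGraph (Option (Fin m)) :=
  SimpleGraph.fromRel fun a b =>
    match a, b with
    | none, some j => j ∈ A
    | some j, some j' => (j' : ℕ) = (j : ℕ) + 1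
    | _, _ => False

/-!
Write `I = {a, b, c}`. Let `P` be a shortest walk from `a` to `b` through `C` and `Q` a shortest
walk from `c` through `C` to a neighbour of the interior of `P`. Minimality makes both induced
paths, and only the last vertex `t` of `Q` sees the interior of `P`.

If `a` and `b` both see `Q`, cut `Q` just after the first neighbour of the later of the two and
append that terminal: the other one hangs from this induced path. If only `a` sees `Q`, follow
`Q` to `t` and then `P` from the last neighbour of `t` on to `b`: again `a` hangs from an induced
path. A vertex hanging from an induced path with one neighbour on it gives a graph of `𝓢`, with
several neighbours a graph of `𝓜`.

If neither `a` nor `b` sees `Q`, then `t` sees a single vertex of `P` (`𝓢`), two consecutive ones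
(`𝓣`, or `𝓜` when `t = c`), or two at distance two; neighbours further apart would shorten `P`.
In the last case `t` can replace the vertex between them, giving another shortest walk from which
`Q` minus `t` hangs by one edge (`𝓢`).
-/

section seqAppend

variable {α : Type*} {f g : ℕ → α} {c i : ℕ}

def seqAppend (f : ℕ → α) (c : ℕ) (g : ℕ → α) (i : ℕ) : α :=
  if i < c then f i else g (i - c)

theorem seqAppend_of_lt (h : i < c) : seqAppend f c g i = f i := if_pos h

theorem seqAppend_of_le (h : c ≤ i) : seqAppend f c g i = g (i - c) := if_neg (by omega)

theorem forall_seqAppend {P : α → Prop} {d : ℕ} (hf : ∀ i < c, P (f i))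
    (hg : ∀ i < d, P (g i)) (i : ℕ) (hi : i < c + d) : P (seqAppend f c g i) := by
  rcases lt_or_ge i c with h | h
  · rw [seqAppend_of_lt h]; exact hf i h
  · rw [seqAppend_of_le h]; exact hg _ (by omega)

end seqAppend

namespace SimpleGraph

variable {V : Type*} {G : SimpleGraph V}

/-- `p 0, …, p (n - 1)` is an induced path of `G`. Paths and walks are encoded as sequences with
a length, so that cutting and splicing them is arithmetic on indices. -/
structure IsInducedPath (G : SimpleGraph V) (p : ℕ → V) (n : ℕ) : Prop where
  inj : ∀ i < n, ∀ j < n, p i = p j → i = j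
  adj_iff : ∀ i < n, ∀ j < n, (G.Adj (p i) (p j) ↔ i + 1 = j ∨ j + 1 = i)

namespace IsInducedPath

variable {p q : ℕ → V} {n m : ℕ}

theorem single (v : V) : G.IsInducedPath (fun _ => v) 1 :=
  ⟨fun i hi j hj _ => by omega,
    fun i hi j hj => by simp [show i = 0 by omega, show j = 0 by omega]⟩

theorem mono (hp : G.IsInducedPath p n) (h : m ≤ n) : G.IsInducedPath p m :=
  ⟨fun i hi j hj => hp.inj i (by omega) j (by omega),
    fun i hi j hj => hp.adj_iff i (by omega) j (by omega)⟩

theorem shift (hp : G.IsInducedPath p n) (k : ℕ) :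
    G.IsInducedPath (fun i => p (k + i)) (n - k) :=
  ⟨fun i hi j hj h => by have := hp.inj _ (by omega) _ (by omega) h; omega,
    fun i hi j hj => by rw [hp.adj_iff _ (by omega) _ (by omega)]; omega⟩

theorem reverse (hp : G.IsInducedPath p n) : G.IsInducedPath (fun i => p (n - 1 - i)) n :=
  ⟨fun i hi j hj h => by have := hp.inj _ (by omega) _ (by omega) h; omega,
    fun i hi j hj => by rw [hp.adj_iff _ (by omega) _ (by omega)]; omega⟩

theorem append (hp : G.IsInducedPath p n) (hq : G.IsInducedPath q m)
    (hne : ∀ i < n, ∀ j < m, p i ≠ q j)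
    (hadj : ∀ i < n, ∀ j < m, (G.Adj (p i) (q j) ↔ i + 1 = n ∧ j = 0)) :
    G.IsInducedPath (seqAppend p n q) (n + m) := by
  constructor
  · intro i hi j hj h
    rcases lt_or_ge i n with hi' | hi' <;> rcases lt_or_ge j n with hj' | hj'
    · rw [seqAppend_of_lt hi', seqAppend_of_lt hj'] at h
      exact hp.inj i hi' j hj' h
    · rw [seqAppend_of_lt hi', seqAppend_of_le hj'] at h
      exact absurd h (hne i hi' _ (by omega))
    · rw [seqAppend_of_le hi', seqAppend_of_lt hj'] at h
      exact absurd h.symm (hne j hj' _ (by omega))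
    · rw [seqAppend_of_le hi', seqAppend_of_le hj'] at h
      have := hq.inj _ (by omega) _ (by omega) h
      omega
  · intro i hi j hj
    rcases lt_or_ge i n with hi' | hi' <;> rcases lt_or_ge j n with hj' | hj'
    · rw [seqAppend_of_lt hi', seqAppend_of_lt hj', hp.adj_iff i hi' j hj']
    · rw [seqAppend_of_lt hi', seqAppend_of_le hj', hadj i hi' _ (by omega)]
      omega
    · rw [seqAppend_of_le hi', seqAppend_of_lt hj', G.adj_comm, hadj j hj' _ (by omega)]
      omega
    · rw [seqAppend_of_le hi', seqAppend_of_le hj', hq.adj_iff _ (by omega) _ (by omega)]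
      omega

end IsInducedPath

/-- `p 0, …, p (n - 1)` is a walk of `G` inside `S` from `x` to a vertex of `E`. -/
structure IsWalkIn (G : SimpleGraph V) (S : Set V) (x : V) (E : Set V) (p : ℕ → V) (n : ℕ) :
    Prop where
  pos : 0 < n
  head : p 0 = x
  last : p (n - 1) ∈ E
  mem : ∀ i < n, p i ∈ S
  adj : ∀ i, i + 1 < n → G.Adj (p i) (p (i + 1))

structure IsShortestWalkIn (G : SimpleGraph V) (S : Set V) (x : V) (E : Set V) (p : ℕ → V)
    (n : ℕ) : Prop extends G.IsWalkIn S x E p n where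
  minimal : ∀ p' n', G.IsWalkIn S x E p' n' → n ≤ n'

variable {S S' E E' : Set V} {x y : V} {p g : ℕ → V} {n m : ℕ}

theorem isWalkIn_single (hS : x ∈ S) (hE : x ∈ E) : G.IsWalkIn S x E (fun _ => x) 1 :=
  ⟨one_pos, rfl, hE, fun _ _ => hS, fun i hi => by omega⟩

theorem exists_isWalkIn_of_connected (h : (G.induce S).Connected) (hx : x ∈ S) (hy : y ∈ S) :
    ∃ p n, G.IsWalkIn S x {y} p n := by
  obtain ⟨w⟩ := h.preconnected ⟨x, hx⟩ ⟨y, hy⟩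
  exact ⟨fun i => (w.getVert i).1, w.length + 1, by omega,
    congrArg Subtype.val w.getVert_zero, congrArg Subtype.val w.getVert_length,
    fun i _ => (w.getVert i).2, fun i hi => w.adj_getVert_succ (by omega)⟩

theorem exists_isShortestWalkIn (h : ∃ p n, G.IsWalkIn S x E p n) :
    ∃ p n, G.IsShortestWalkIn S x E p n := by
  classical
  have h' : ∃ n p, G.IsWalkIn S x E p n := let ⟨p, n, hp⟩ := h; ⟨n, p, hp⟩
  obtain ⟨p, hp⟩ := Nat.find_spec h'
  exact ⟨p, _, hp, fun p' n' hp' => Nat.find_min' h' ⟨p', hp'⟩⟩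

namespace IsWalkIn

theorem mono (hp : G.IsWalkIn S x E p n) (hS : S ⊆ S') (hE : E ⊆ E') :
    G.IsWalkIn S' x E' p n :=
  ⟨hp.pos, hp.head, hE hp.last, fun i hi => hS (hp.mem i hi), hp.adj⟩

theorem take (hp : G.IsWalkIn S x E p n) {i : ℕ} (hi : i < n) (hE : p i ∈ E') :
    G.IsWalkIn S x E' p (i + 1) :=
  ⟨by omega, hp.head, hE, fun j hj => hp.mem j (by omega), fun j hj => hp.adj j (by omega)⟩

theorem drop (hp : G.IsWalkIn S x E p n) {j : ℕ} (hj : j < n) :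
    G.IsWalkIn S (p j) E (fun i => p (j + i)) (n - j) :=
  ⟨by omega, rfl, by simpa [show j + (n - j - 1) = n - 1 by omega] using hp.last,
    fun i hi => hp.mem _ (by omega), fun i hi => hp.adj _ (by omega)⟩

theorem append (hp : G.IsWalkIn S x {v | G.Adj v y} p n) (hg : G.IsWalkIn S y E g m) :
    G.IsWalkIn S x E (seqAppend p n g) (n + m) := by
  have hn := hp.pos
  refine ⟨by omega, by rw [seqAppend_of_lt hn, hp.head], ?_, forall_seqAppend hp.mem hg.mem,
    fun i hi => ?_⟩
  · rw [seqAppend_of_le (by have := hg.pos; omega), show n + m - 1 - n = m - 1 by omega]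
    exact hg.last
  rcases lt_trichotomy (i + 1) n with h | h | h
  · rw [seqAppend_of_lt (by omega), seqAppend_of_lt h]; exact hp.adj i h
  · rw [seqAppend_of_lt (by omega), seqAppend_of_le h.ge, h, Nat.sub_self, hg.head,
      show i = n - 1 by omega]
    exact hp.last
  · rw [seqAppend_of_le (by omega), seqAppend_of_le (by omega),
      show i + 1 - n = i - n + 1 by omega]
    exact hg.adj _ (by omega)

theorem two_lt (hp : G.IsWalkIn S x {y} p n) (hxy : x ≠ y) (hadj : ¬ G.Adj x y) : 2 < n := by
  have hn := hp.pos
  have hy : p (n - 1) = y := hp.last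
  by_contra
  interval_cases n
  · exact hxy (hp.head.symm.trans hy)
  · exact hadj (hp.head ▸ hy ▸ hp.adj 0 one_lt_two)

end IsWalkIn

namespace IsShortestWalkIn

theorem not_mem (hp : G.IsShortestWalkIn S x E p n) {i : ℕ} (hi : i + 1 < n) : p i ∉ E :=
  fun h => by have := hp.minimal _ _ (hp.toIsWalkIn.take (by omega) h); omega

theorem not_adj (hp : G.IsShortestWalkIn S x E p n) {i j : ℕ} (hij : i + 1 < j) (hj : j < n) :
    ¬ G.Adj (p i) (p j) := fun h => by
  have := hp.minimal _ _
    ((hp.toIsWalkIn.take (E' := {v | G.Adj v (p j)}) (by omega) h).append (hp.toIsWalkIn.drop hj))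
  omega

theorem injective (hp : G.IsShortestWalkIn S x E p n) {i j : ℕ} (hij : i < j) (hj : j < n) :
    p i ≠ p j := fun h => by
  rcases lt_or_ge (j + 1) n with hj' | hj'
  · have hi : p i ∈ {v | G.Adj v (p (j + 1))} := by rw [h]; exact hp.adj j hj'
    have := hp.minimal _ _ ((hp.toIsWalkIn.take (by omega) hi).append (hp.toIsWalkIn.drop hj'))
    omega
  · have hi : p i ∈ E := by rw [h, show j = n - 1 by omega]; exact hp.last
    have := hp.minimal _ _ (hp.toIsWalkIn.take (by omega) hi)
    omega

theorem ne_head (hp : G.IsShortestWalkIn S x E p n) {i : ℕ} (hi0 : 0 < i) (hi : i < n) :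
    p i ≠ x := fun h => hp.injective hi0 hi (h.trans hp.head.symm).symm

theorem mem_of_pos {s : Set V} (hp : G.IsShortestWalkIn (s ∪ {x}) x E p n) {i : ℕ} (hi0 : 0 < i)
    (hi : i < n) : p i ∈ s :=
  (hp.mem i hi).resolve_right (hp.ne_head hi0 hi)

theorem mem_of_pos_of_lt {s : Set V} (hp : G.IsShortestWalkIn (s ∪ {x, y}) x {y} p n) {i : ℕ}
    (hi0 : 0 < i) (hi : i + 1 < n) : p i ∈ s := by
  have := hp.mem i (by omega)
  have := hp.ne_head hi0 (by omega)
  have := hp.not_mem hi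
  simp_all

theorem isInducedPath (hp : G.IsShortestWalkIn S x E p n) : G.IsInducedPath p n := by
  refine ⟨fun i hi j hj h => ?_, fun i hi j hj => ⟨fun h => ?_, ?_⟩⟩
  · rcases lt_trichotomy i j with hij | hij | hij
    · exact absurd h (hp.injective hij hj)
    · exact hij
    · exact absurd h.symm (hp.injective hij hi)
  · rcases lt_trichotomy (i + 1) j with hij | hij | hij
    · exact absurd h (hp.not_adj hij hj)
    · exact Or.inl hij
    rcases lt_or_ge (j + 1) i with hji | hji
    · exact absurd h.symm (hp.not_adj hji hi)
    rcases eq_or_ne (j + 1) i with hji' | hji'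
    · exact Or.inr hji'
    · exact absurd h (by rw [show i = j by omega]; exact G.irrefl)
  · rintro (rfl | rfl)
    · exact hp.adj i hj
    · exact (hp.adj j hi).symm

theorem le_add_two (hp : G.IsShortestWalkIn S x E p n) {i j : ℕ} {t : V} (ht : t ∈ S)
    (hit : G.Adj (p i) t) (htj : G.Adj t (p j)) (hij : i < j) (hjn : j < n) : j ≤ i + 2 := by
  have hpt : G.IsWalkIn S x {v | G.Adj v t} p (i + 1) := hp.toIsWalkIn.take (by omega) hit
  have := hp.minimal _ _ ((hpt.append (isWalkIn_single (E := {v | G.Adj v (p j)}) ht htj)).append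
    (hp.toIsWalkIn.drop hjn))
  omega

theorem update (hp : G.IsShortestWalkIn S x E p n) {i : ℕ} {t : V} (ht : t ∈ S)
    (hit : G.Adj (p i) t) (htj : G.Adj t (p (i + 2))) (hin : i + 2 < n) :
    G.IsShortestWalkIn S x E (Function.update p (i + 1) t) n := by
  refine ⟨⟨hp.pos, ?_, ?_, fun k hk => ?_, fun k hk => ?_⟩, hp.minimal⟩
  · rw [Function.update_of_ne (by omega)]; exact hp.head
  · rw [Function.update_of_ne (by omega)]; exact hp.last
  · rcases eq_or_ne k (i + 1) with rfl | h
    · rw [Function.update_self]; exact ht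
    · rw [Function.update_of_ne h]; exact hp.mem k hk
  · rcases eq_or_ne k i with rfl | h
    · rw [Function.update_of_ne (by omega), Function.update_self]; exact hit
    rcases eq_or_ne k (i + 1) with rfl | h'
    · rw [Function.update_self, Function.update_of_ne (by omega)]; exact htj
    rw [Function.update_of_ne h', Function.update_of_ne (by omega)]
    exact hp.adj k hk

end IsShortestWalkIn

end SimpleGraph

/-- A path on `m` vertices and a path on `r` vertices, the last vertex of the second one being
joined to the vertices of the first one whose index lies in `N`. -/
def twoPathGraph (m r : ℕ) (N : Set ℕ) : SimpleGraph (Fin m ⊕ Fin r) :=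
  SimpleGraph.fromRel fun u v =>
    match u, v with
    | .inl i, .inl i' => (i' : ℕ) = i + 1
    | .inr j, .inr j' => (j' : ℕ) = j + 1
    | .inl i, .inr j => (i : ℕ) ∈ N ∧ (j : ℕ) + 1 = r
    | .inr _, .inl _ => False

def spiderSToTwoPath (n : Fin 3 → ℕ) :
    Option (Σ i : Fin 3, Fin (n i)) → Fin (n 0 + n 1 + 1) ⊕ Fin (n 2)
  | none => .inl ⟨n 0, by omega⟩
  | some ⟨0, j⟩ => .inl ⟨n 0 - 1 - j, by omega⟩
  | some ⟨1, j⟩ => .inl ⟨n 0 + 1 + j, by omega⟩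
  | some ⟨2, j⟩ => .inr ⟨n 2 - 1 - j, by omega⟩

theorem spiderSToTwoPath_adj (n : Fin 3 → ℕ) (u v : Option (Σ i : Fin 3, Fin (n i))) :
    (twoPathGraph (n 0 + n 1 + 1) (n 2) {n 0}).Adj (spiderSToTwoPath n u)
      (spiderSToTwoPath n v) ↔ (spiderS n).Adj u v := by
  rcases u with _ | ⟨i, j⟩ <;> rcases v with _ | ⟨i', j'⟩ <;> (try fin_cases i) <;>
    (try fin_cases i') <;> simp [spiderSToTwoPath, spiderS, twoPathGraph, Fin.ext_iff] <;> omega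

def spiderSEmbedding (n : Fin 3 → ℕ) :
    spiderS n ↪g twoPathGraph (n 0 + n 1 + 1) (n 2) {n 0} where
  toFun := spiderSToTwoPath n
  inj' := by
    rintro (_ | ⟨i, j⟩) (_ | ⟨i', j'⟩) h <;> (try fin_cases i) <;> (try fin_cases i') <;>
      simp [spiderSToTwoPath] at h ⊢ <;> omega
  map_rel_iff' := spiderSToTwoPath_adj n _ _

theorem spiderSToTwoPath_image (n : Fin 3 → ℕ) (hn : ∀ i, 1 ≤ n i) :
    spiderSToTwoPath n ''
        {x | ∃ y : Σ i : Fin 3, Fin (n i), x = some y ∧ (y.2 : ℕ) + 1 = n y.1} =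
      {.inl ⟨0, by omega⟩, .inl ⟨n 0 + n 1, by omega⟩, .inr ⟨0, hn 2⟩} := by
  ext u
  constructor
  · rintro ⟨_, ⟨⟨i, j⟩, rfl, hj⟩, rfl⟩
    fin_cases i <;> simp [spiderSToTwoPath, Fin.ext_iff] at hj ⊢ <;> omega
  · have := hn 0; have := hn 1; have := hn 2
    rintro (rfl | rfl | rfl)
    · exact ⟨_, ⟨⟨0, ⟨n 0 - 1, by omega⟩⟩, rfl, by simp; omega⟩,
        by simp [spiderSToTwoPath]⟩
    · exact ⟨_, ⟨⟨1, ⟨n 1 - 1, by omega⟩⟩, rfl, by simp; omega⟩,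
        by simp [spiderSToTwoPath]; omega⟩
    · exact ⟨_, ⟨⟨2, ⟨n 2 - 1, by omega⟩⟩, rfl, by simp; omega⟩,
        by simp [spiderSToTwoPath]⟩

def spiderTToTwoPath (n : Fin 3 → ℕ) :
    (Σ i : Fin 3, Fin (n i + 1)) → Fin (n 0 + n 1 + 2) ⊕ Fin (n 2 + 1)
  | ⟨0, j⟩ => .inl ⟨n 0 - j, by omega⟩
  | ⟨1, j⟩ => .inl ⟨n 0 + 1 + j, by omega⟩
  | ⟨2, j⟩ => .inr ⟨n 2 - j, by omega⟩

theorem spiderTToTwoPath_adj (n : Fin 3 → ℕ) (u v : Σ i : Fin 3, Fin (n i + 1)) :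
    (twoPathGraph (n 0 + n 1 + 2) (n 2 + 1) {n 0, n 0 + 1}).Adj (spiderTToTwoPath n u)
      (spiderTToTwoPath n v) ↔ (spiderT n).Adj u v := by
  rcases u with ⟨i, j⟩; rcases v with ⟨i', j'⟩
  fin_cases i <;> fin_cases i' <;>
    simp [spiderTToTwoPath, spiderT, twoPathGraph, Fin.ext_iff, -Fin.val_eq_zero_iff] <;> omega

def spiderTEmbedding (n : Fin 3 → ℕ) :
    spiderT n ↪g twoPathGraph (n 0 + n 1 + 2) (n 2 + 1) {n 0, n 0 + 1} where
  toFun := spiderTToTwoPath n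
  inj' := by
    rintro ⟨i, j⟩ ⟨i', j'⟩ h
    fin_cases i <;> fin_cases i' <;> simp [spiderTToTwoPath] at h ⊢ <;> omega
  map_rel_iff' := spiderTToTwoPath_adj n _ _

theorem spiderTToTwoPath_image (n : Fin 3 → ℕ) :
    spiderTToTwoPath n '' {x | (x.2 : ℕ) = n x.1} =
      {.inl ⟨0, by omega⟩, .inl ⟨n 0 + n 1 + 1, by omega⟩, .inr ⟨0, by omega⟩} := by
  ext u
  constructor
  · rintro ⟨⟨i, j⟩, hj, rfl⟩
    fin_cases i <;> simp [spiderTToTwoPath, Fin.ext_iff, -Fin.val_eq_zero_iff] at hj ⊢ <;> omega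
  · rintro (rfl | rfl | rfl)
    · exact ⟨⟨0, ⟨n 0, by omega⟩⟩, rfl, by simp [spiderTToTwoPath]⟩
    · exact ⟨⟨1, ⟨n 1, by omega⟩⟩, rfl, by simp [spiderTToTwoPath]; omega⟩
    · exact ⟨⟨2, ⟨n 2, by omega⟩⟩, rfl, by simp [spiderTToTwoPath]⟩

def centerPathToTwoPath (m : ℕ) : Option (Fin m) → Fin m ⊕ Fin 1
  | none => .inr 0
  | some j => .inl j

theorem centerPathToTwoPath_adj (m : ℕ) (A : Finset (Fin m)) (u v : Option (Fin m)) :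
    (twoPathGraph m 1 (Fin.val '' (A : Set (Fin m)))).Adj (centerPathToTwoPath m u)
      (centerPathToTwoPath m v) ↔ (centerPath m A).Adj u v := by
  rcases u with _ | j <;> rcases v with _ | j' <;>
    simp [centerPathToTwoPath, centerPath, twoPathGraph, Fin.val_inj]

def centerPathEmbedding (m : ℕ) (A : Finset (Fin m)) :
    centerPath m A ↪g twoPathGraph m 1 (Fin.val '' (A : Set (Fin m))) where
  toFun := centerPathToTwoPath m
  inj' := by rintro (_ | j) (_ | j') h <;> simp_all [centerPathToTwoPath]
  map_rel_iff' := centerPathToTwoPath_adj m A _ _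

theorem centerPathToTwoPath_image (m : ℕ) (hm : 0 < m) :
    centerPathToTwoPath m ''
        {x | x = none ∨ ∃ j : Fin m, x = some j ∧ ((j : ℕ) = 0 ∨ (j : ℕ) + 1 = m)} =
      {.inr 0, .inl ⟨0, hm⟩, .inl ⟨m - 1, by omega⟩} := by
  ext u
  constructor
  · rintro ⟨_, rfl | ⟨j, rfl, hj⟩, rfl⟩
    · simp [centerPathToTwoPath]
    · simp [centerPathToTwoPath, Fin.ext_iff]; omega
  · rintro (rfl | rfl | rfl)
    · exact ⟨none, Or.inl rfl, rfl⟩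
    · exact ⟨some ⟨0, hm⟩, Or.inr ⟨_, rfl, Or.inl rfl⟩, rfl⟩
    · exact ⟨some ⟨m - 1, by omega⟩, Or.inr ⟨_, rfl, Or.inr (by simp; omega)⟩, rfl⟩

namespace SimpleGraph

variable {V : Type*} {G : SimpleGraph V} {X : Set V} {p q : ℕ → V} {m r x : ℕ}

def HasInducedS (G : SimpleGraph V) (X T : Set V) : Prop :=
  ∃ n : Fin 3 → ℕ, (∀ i, 1 ≤ n i) ∧ ∃ e : spiderS n ↪g G, (∀ x, e x ∈ X) ∧
    (fun x => e x) ''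
      {x | ∃ y : Σ i : Fin 3, Fin (n i), x = some y ∧ (y.2 : ℕ) + 1 = n y.1} = T

def HasInducedT (G : SimpleGraph V) (X T : Set V) : Prop :=
  ∃ n : Fin 3 → ℕ, (∀ i, 1 ≤ n i) ∧ ∃ e : spiderT n ↪g G, (∀ x, e x ∈ X) ∧
    (fun x => e x) '' {x : Σ i : Fin 3, Fin (n i + 1) | (x.2 : ℕ) = n x.1} = T

def HasInducedM (G : SimpleGraph V) (X T : Set V) : Prop :=
  ∃ (m : ℕ) (A : Finset (Fin m)), 2 ≤ A.card ∧
    (∀ j ∈ A, (j : ℕ) ≠ 0 ∧ (j : ℕ) + 1 ≠ m) ∧ ∃ e : centerPath m A ↪g G, (∀ x, e x ∈ X) ∧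
      (fun x => e x) '' {x : Option (Fin m) | x = none ∨
        ∃ j : Fin m, x = some j ∧ ((j : ℕ) = 0 ∨ (j : ℕ) + 1 = m)} = T

/-- `G[X]` has an induced subgraph in `𝓢 ∪ 𝓣 ∪ 𝓜` whose extremities are exactly `T`. -/
def HasInducedSTM (G : SimpleGraph V) (X T : Set V) : Prop :=
  G.HasInducedS X T ∨ G.HasInducedT X T ∨ G.HasInducedM X T

def twoPathEmbedding {N : Set ℕ} (hp : G.IsInducedPath p m)
    (hq : G.IsInducedPath q r) (hne : ∀ i < m, ∀ j < r, p i ≠ q j)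
    (hadj : ∀ i < m, ∀ j < r, (G.Adj (p i) (q j) ↔ i ∈ N ∧ j + 1 = r)) :
    twoPathGraph m r N ↪g G where
  toFun := Sum.elim (fun i => p i) (fun j => q j)
  inj' := by
    rintro (i | j) (i' | j') h <;> simp only [Sum.elim_inl, Sum.elim_inr] at h
    · exact congrArg _ (Fin.ext (hp.inj _ i.2 _ i'.2 h))
    · exact absurd h (hne _ i.2 _ j'.2)
    · exact absurd h.symm (hne _ i'.2 _ j.2)
    · exact congrArg _ (Fin.ext (hq.inj _ j.2 _ j'.2 h))
  map_rel_iff' {u v} := by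
    change G.Adj (Sum.elim (fun i : Fin m => p i) (fun j : Fin r => q j) u)
      (Sum.elim (fun i : Fin m => p i) (fun j : Fin r => q j) v) ↔ _
    rcases u with i | j <;> rcases v with i' | j' <;>
      simp only [twoPathGraph, fromRel_adj, Sum.elim_inl,
        Sum.elim_inr, ne_eq, Sum.inl.injEq, Sum.inr.injEq, reduceCtorEq, not_false_eq_true,
        true_and, or_false, false_or, Fin.ext_iff]
    · rw [hp.adj_iff _ i.2 _ i'.2]; omega
    · exact hadj _ i.2 _ j'.2
    · rw [G.adj_comm]; exact hadj _ i'.2 _ j.2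
    · rw [hq.adj_iff _ j.2 _ j'.2]; omega

theorem twoPathEmbedding_mem {N : Set ℕ} (hp : G.IsInducedPath p m)
    (hq : G.IsInducedPath q r) (hne : ∀ i < m, ∀ j < r, p i ≠ q j)
    (hadj : ∀ i < m, ∀ j < r, (G.Adj (p i) (q j) ↔ i ∈ N ∧ j + 1 = r))
    (hpX : ∀ i < m, p i ∈ X) (hqX : ∀ j < r, q j ∈ X) (u : Fin m ⊕ Fin r) :
    twoPathEmbedding hp hq hne hadj u ∈ X := by
  rcases u with i | j
  exacts [hpX _ i.2, hqX _ j.2]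

theorem hasInducedS_of_paths {y : ℕ} (hx : 0 < x) (hy : 0 < y) (hr : 0 < r)
    (hp : G.IsInducedPath p (x + y + 1)) (hq : G.IsInducedPath q r)
    (hne : ∀ i < x + y + 1, ∀ j < r, p i ≠ q j)
    (hadj : ∀ i < x + y + 1, ∀ j < r, (G.Adj (p i) (q j) ↔ i = x ∧ j + 1 = r))
    (hpX : ∀ i < x + y + 1, p i ∈ X) (hqX : ∀ j < r, q j ∈ X) :
    G.HasInducedS X {p 0, p (x + y), q 0} := by
  let n := ![x, y, r]
  have hn : ∀ i, 1 ≤ n i := fun i => by fin_cases i <;> simpa [n]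
  let φ : twoPathGraph (n 0 + n 1 + 1) (n 2) {n 0} ↪g G := twoPathEmbedding hp hq hne hadj
  refine ⟨n, hn, (spiderSEmbedding n).trans φ,
    fun u => twoPathEmbedding_mem hp hq hne hadj hpX hqX _, ?_⟩
  rw [show (fun u => ((spiderSEmbedding n).trans φ) u) = φ ∘ spiderSToTwoPath n from rfl,
    Set.image_comp, spiderSToTwoPath_image n hn]
  simp only [Set.image_insert_eq, Set.image_singleton]
  rfl

theorem hasInducedT_of_paths {y : ℕ} (hx : 0 < x) (hy : 0 < y) (hr : 0 < r)
    (hp : G.IsInducedPath p (x + y + 2)) (hq : G.IsInducedPath q (r + 1))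
    (hne : ∀ i < x + y + 2, ∀ j < r + 1, p i ≠ q j)
    (hadj : ∀ i < x + y + 2, ∀ j < r + 1,
      (G.Adj (p i) (q j) ↔ (i = x ∨ i = x + 1) ∧ j = r))
    (hpX : ∀ i < x + y + 2, p i ∈ X) (hqX : ∀ j < r + 1, q j ∈ X) :
    G.HasInducedT X {p 0, p (x + y + 1), q 0} := by
  let n := ![x, y, r]
  have hn : ∀ i, 1 ≤ n i := fun i => by fin_cases i <;> simpa [n]
  have hadj' : ∀ i < x + y + 2, ∀ j < r + 1,
      (G.Adj (p i) (q j) ↔ i ∈ ({x, x + 1} : Set ℕ) ∧ j + 1 = r + 1) := by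
    intro i hi j hj
    simp only [hadj i hi j hj, Set.mem_insert_iff, Set.mem_singleton_iff, Nat.add_right_cancel_iff]
  let φ : twoPathGraph (n 0 + n 1 + 2) (n 2 + 1) {n 0, n 0 + 1} ↪g G :=
    twoPathEmbedding hp hq hne hadj'
  refine ⟨n, hn, (spiderTEmbedding n).trans φ,
    fun u => twoPathEmbedding_mem hp hq hne hadj' hpX hqX _, ?_⟩
  rw [show (fun u => ((spiderTEmbedding n).trans φ) u) = φ ∘ spiderTToTwoPath n from rfl,
    Set.image_comp, spiderTToTwoPath_image n]
  simp only [Set.image_insert_eq, Set.image_singleton]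
  rfl

theorem hasInducedM_of_path {w : ℕ → V} {u : V} (hw : G.IsInducedPath w m)
    (hu : ∀ i < m, w i ≠ u) (hint : ∀ i < m, G.Adj (w i) u → 0 < i ∧ i + 1 < m)
    (htwo : ∃ i < m, ∃ j < m, i ≠ j ∧ G.Adj (w i) u ∧ G.Adj (w j) u)
    (hwX : ∀ i < m, w i ∈ X) (huX : u ∈ X) :
    G.HasInducedM X {u, w 0, w (m - 1)} := by
  classical
  obtain ⟨i, hi, j, hj, hij, hiu, hju⟩ := htwo
  let A : Finset (Fin m) := Finset.univ.filter fun k => G.Adj (w k) u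
  have hadj : ∀ k < m, ∀ l < 1,
      (G.Adj (w k) ((fun _ => u) l) ↔ k ∈ Fin.val '' (A : Set (Fin m)) ∧ l + 1 = 1) := by
    intro k hk l hl
    simp only [A, Finset.coe_filter, Finset.mem_univ, true_and]
    exact ⟨fun h => ⟨⟨⟨k, hk⟩, h, rfl⟩, by omega⟩,
      fun ⟨⟨k', h, hk'⟩, _⟩ => hk' ▸ h⟩
  have hne : ∀ k < m, ∀ l < 1, w k ≠ (fun _ => u) l := fun k hk _ _ => hu k hk
  let φ := twoPathEmbedding hw (.single u) hne hadj
  refine ⟨m, A, ?_, fun k hk => ?_, (centerPathEmbedding m A).trans φ,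
    fun v => twoPathEmbedding_mem hw (.single u) hne hadj hwX (fun _ _ => huX) _, ?_⟩
  · refine Finset.one_lt_card.2
      ⟨⟨i, hi⟩, ?_, ⟨j, hj⟩, ?_, fun h => hij (congrArg Fin.val h)⟩ <;> simpa [A]
  · have := hint k k.2 (by simpa [A] using hk)
    omega
  have hm : 0 < m := by omega
  rw [show (fun v => ((centerPathEmbedding m A).trans φ) v) = φ ∘ centerPathToTwoPath m
    from rfl, Set.image_comp, centerPathToTwoPath_image m hm]
  simp only [Set.image_insert_eq, Set.image_singleton]
  rfl

/-- One neighbour of `u` on the path gives a graph of `𝓢`, several give a graph of `𝓜`. -/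
theorem hasInducedSTM_of_pendant {w : ℕ → V} {k : ℕ} {u : V} (hw : G.IsInducedPath w m)
    (hu : ∀ i < m, w i ≠ u) (h0 : ¬ G.Adj (w 0) u) (hlast : ¬ G.Adj (w (m - 1)) u)
    (hk : k < m) (hwk : G.Adj (w k) u) (hwX : ∀ i < m, w i ∈ X) (huX : u ∈ X) :
    G.HasInducedSTM X {w 0, w (m - 1), u} := by
  have hint : ∀ i < m, G.Adj (w i) u → 0 < i ∧ i + 1 < m := fun i hi h => by
    refine ⟨Nat.pos_of_ne_zero ?_, ?_⟩
    · rintro rfl; exact h0 h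
    · by_contra; exact hlast (by rwa [show m - 1 = i by omega])
  by_cases hone : ∀ i < m, G.Adj (w i) u → i = k
  · obtain ⟨hk0, hkm⟩ := hint k hk hwk
    obtain ⟨y, rfl⟩ : ∃ y, m = k + y + 1 := ⟨m - k - 1, by omega⟩
    refine Or.inl (hasInducedS_of_paths hk0 (by omega) one_pos hw (.single u)
      (fun i hi _ _ => hu i hi) (fun i hi j hj => ⟨fun h => ⟨hone i hi h, by omega⟩, ?_⟩)
      hwX (fun _ _ => huX))
    rintro ⟨rfl, -⟩; exact hwk
  · simp only [not_forall] at hone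
    obtain ⟨i, hi, hiu, hik⟩ := hone
    have := hasInducedM_of_path hw hu hint ⟨i, hi, k, hk, hik, hiu, hwk⟩ hwX huX
    rw [Set.insert_comm, Set.pair_comm] at this
    exact Or.inr (Or.inr this)

theorem hasInducedSTM_of_both_see {ia ib : ℕ} {a b : V}
    (hq : G.IsInducedPath q r) (hqa : ∀ i < r, q i ≠ a) (hqb : ∀ i < r, q i ≠ b)
    (hba : b ≠ a) (hnba : ¬ G.Adj b a) (ha0 : ¬ G.Adj a (q 0)) (hib : ib < r)
    (hbib : G.Adj b (q ib)) (hbmin : ∀ i < ib, ¬ G.Adj b (q i)) (hia : ia ≤ ib)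
    (haia : G.Adj a (q ia))
    (hqX : ∀ i < r, q i ∈ X) (haX : a ∈ X) (hbX : b ∈ X) :
    G.HasInducedSTM X {q 0, b, a} := by
  have hw : G.IsInducedPath (seqAppend q (ib + 1) fun _ => b) (ib + 1 + 1) := by
    refine (hq.mono (by omega)).append (.single b) (fun i hi _ _ => hqb i (by omega))
      fun i hi j hj => ⟨fun h => ⟨?_, by omega⟩, fun ⟨h, _⟩ => ?_⟩
    · by_contra; exact hbmin i (by omega) h.symm
    · rw [show i = ib by omega]; exact hbib.symm
  have := hasInducedSTM_of_pendant hw (u := a) (k := ia)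
    (forall_seqAppend (P := (· ≠ a)) (fun i hi => hqa i (by omega)) fun _ _ => hba)
    (by rw [seqAppend_of_lt (by omega)]; exact fun h => ha0 h.symm)
    (by rwa [seqAppend_of_le (by omega)]) (by omega)
    (by rw [seqAppend_of_lt (by omega)]; exact haia.symm)
    (forall_seqAppend (P := (· ∈ X)) (fun i hi => hqX i (by omega)) fun _ _ => hbX) haX
  rwa [seqAppend_of_lt (by omega), seqAppend_of_le (by omega)] at this

/-- `q` is an induced path disjoint from the induced path `p`, and its last vertex is the only
one with a neighbour in the interior of `p`. -/
structure HangsFrom (G : SimpleGraph V) (q : ℕ → V) (r : ℕ) (p : ℕ → V) (m : ℕ) :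
    Prop where
  path_p : G.IsInducedPath p m
  path_q : G.IsInducedPath q r
  pos : 0 < r
  ne : ∀ i < m, ∀ j < r, p i ≠ q j
  far : ∀ i, 0 < i → i + 1 < m → ∀ j, j + 1 < r → ¬ G.Adj (p i) (q j)
  last : ∃ x, 0 < x ∧ x + 1 < m ∧ G.Adj (p x) (q (r - 1))

namespace HangsFrom

theorem reverse (h : G.HangsFrom q r p m) : G.HangsFrom q r (fun i => p (m - 1 - i)) m := by
  obtain ⟨x, hx, hxm, htx⟩ := h.last
  refine ⟨h.path_p.reverse, h.path_q, h.pos, fun i hi j hj => h.ne _ (by omega) j hj,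
    fun i hi0 him j hj => h.far _ (by omega) (by omega) j hj, m - 1 - x, by omega, by omega, ?_⟩
  rwa [show m - 1 - (m - 1 - x) = x by omega]

theorem not_adj_ends (h : G.HangsFrom q r p m) : ¬ G.Adj (p (m - 1)) (p 0) := by
  obtain ⟨x, hx, hxm, -⟩ := h.last
  rw [h.path_p.adj_iff _ (by omega) _ (by omega)]
  omega

theorem hasInducedSTM_of_one_sees (h : G.HangsFrom q r p m) (h0 : ¬ G.Adj (p 0) (q 0))
    (ha : ∃ j < r, G.Adj (p 0) (q j)) (hb : ∀ j < r, ¬ G.Adj (p (m - 1)) (q j))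
    (hpX : ∀ i < m, p i ∈ X) (hqX : ∀ j < r, q j ∈ X) :
    G.HasInducedSTM X {q 0, p (m - 1), p 0} := by
  classical
  obtain ⟨ia, hia, haia⟩ := ha
  obtain ⟨x₀, hx₀, hx₀m, htx₀⟩ := h.last
  let J (i : ℕ) : Prop := 0 < i ∧ i + 1 < m ∧ G.Adj (p i) (q (r - 1))
  set x := Nat.findGreatest J m
  obtain ⟨hx, hxm, htx⟩ : J x :=
    Nat.findGreatest_spec (P := J) (m := x₀) (by omega) ⟨hx₀, hx₀m, htx₀⟩
  have hmax (i : ℕ) (hxi : x < i) (him : i + 1 < m) : ¬ G.Adj (p i) (q (r - 1)) :=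
    fun h => Nat.findGreatest_is_greatest hxi (by omega) ⟨by omega, him, h⟩
  have hw : G.IsInducedPath (seqAppend q r fun k => p (x + k)) (r + (m - x)) := by
    refine h.path_q.append (h.path_p.shift x) (fun j hj k hk => (h.ne _ (by omega) j hj).symm)
      fun j hj k hk => ⟨fun hjk => ?_, fun ⟨hj, hk⟩ => ?_⟩
    · rw [G.adj_comm] at hjk
      have hxk : x + k + 1 < m := by
        by_contra
        exact hb j hj (by rwa [show m - 1 = x + k by omega])
      have hjr : j + 1 = r := by
        by_contra
        exact h.far _ (by omega) hxk j (by omega) hjk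
      refine ⟨hjr, ?_⟩
      by_contra
      exact hmax _ (by omega) hxk (by rwa [show r - 1 = j by omega])
    · rw [G.adj_comm, hk, add_zero, show j = r - 1 by omega]
      exact htx
  have hlast : x + (r + (m - x) - 1 - r) = m - 1 := by omega
  have := hasInducedSTM_of_pendant hw (u := p 0) (k := ia)
    (forall_seqAppend (P := (· ≠ p 0)) (fun j hj => (h.ne 0 (by omega) j hj).symm)
      fun k hk h' => absurd (h.path_p.inj _ (by omega) _ (by omega) h') (by omega))
    (by rw [seqAppend_of_lt h.pos]; exact fun h' => h0 h'.symm)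
    (by rw [seqAppend_of_le (by omega), hlast]; exact h.not_adj_ends)
    (by omega) (by rw [seqAppend_of_lt hia]; exact haia.symm)
    (forall_seqAppend (P := (· ∈ X)) hqX fun k hk => hpX _ (by omega)) (hpX 0 (by omega))
  rwa [seqAppend_of_lt h.pos, seqAppend_of_le (by omega), hlast] at this

end HangsFrom

/-- Exchanging `p (x + 1)` for `q r` gives another shortest walk, from which `q` without its last
vertex hangs by a single edge. -/
theorem hasInducedS_of_detour {S E : Set V} {a : V} (hP : G.IsShortestWalkIn S a E p m)
    (hq : G.IsInducedPath q (r + 1)) (hr : 0 < r) (hne : ∀ i < m, ∀ j < r + 1, p i ≠ q j)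
    (hnear : ∀ i < m, ∀ j < r, ¬ G.Adj (p i) (q j)) (hxm : x + 2 < m)
    (htx : G.Adj (p x) (q r)) (htx' : G.Adj (q r) (p (x + 2))) (htS : q r ∈ S)
    (hpX : ∀ i < m, p i ∈ X) (hqX : ∀ j < r + 1, q j ∈ X) :
    G.HasInducedS X {p 0, p (m - 1), q 0} := by
  set p' := Function.update p (x + 1) (q r)
  have hp' : G.IsInducedPath p' (x + 1 + (m - x - 2) + 1) :=
    (hP.update htS htx htx' hxm).isInducedPath.mono (by omega)
  have hp'_self : p' (x + 1) = q r := Function.update_self ..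
  have hp'_of_ne {i : ℕ} (hi : i ≠ x + 1) : p' i = p i := Function.update_of_ne hi _ _
  have := hasInducedS_of_paths (X := X) (by omega) (by omega) hr hp' (hq.mono (Nat.le_succ r))
    (fun i hi j hj => ?_) (fun i hi j hj => ?_) (fun i hi => ?_) (fun j hj => hqX j (by omega))
  · rwa [hp'_of_ne (by omega), hp'_of_ne (by omega), show x + 1 + (m - x - 2) = m - 1 by omega]
      at this
  · rcases eq_or_ne i (x + 1) with rfl | h
    · rw [hp'_self]
      exact fun h => absurd (hq.inj _ (by omega) _ (by omega) h) (by omega)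
    · rw [hp'_of_ne h]; exact hne i (by omega) j (by omega)
  · rcases eq_or_ne i (x + 1) with rfl | h
    · rw [hp'_self, hq.adj_iff _ (by omega) _ (by omega)]; omega
    · rw [hp'_of_ne h]; exact iff_of_false (hnear i (by omega) j hj) (by omega)
  · rcases eq_or_ne i (x + 1) with rfl | h
    · rw [hp'_self]; exact hqX r (by omega)
    · rw [hp'_of_ne h]; exact hpX i (by omega)

theorem hasInducedSTM_of_consecutive (hp : G.IsInducedPath p m) (hq : G.IsInducedPath q (r + 1))
    (hr : 0 < r) (hne : ∀ i < m, ∀ j < r + 1, p i ≠ q j)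
    (hnear : ∀ i < m, ∀ j < r, ¬ G.Adj (p i) (q j)) (hx : 0 < x) (hxm : x < m)
    (htx : G.Adj (p x) (q r)) (ht : ∀ i < m, G.Adj (p i) (q r) → i = x ∨ i = x + 1)
    (hlast : ¬ G.Adj (p (m - 1)) (q r)) (hpX : ∀ i < m, p i ∈ X)
    (hqX : ∀ j < r + 1, q j ∈ X) : G.HasInducedSTM X {p 0, p (m - 1), q 0} := by
  have hxm' : x + 1 < m := by
    by_contra; exact hlast (by rwa [show m - 1 = x by omega])
  have hadj (i : ℕ) (hi : i < m) (j : ℕ) (hj : j < r + 1) :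
      G.Adj (p i) (q j) ↔ G.Adj (p i) (q r) ∧ j = r := by
    obtain hjr | rfl := Nat.lt_succ_iff_lt_or_eq.1 hj
    · exact iff_of_false (hnear i hi j hjr) (by omega)
    · simp
  by_cases hx1 : G.Adj (p (x + 1)) (q r)
  · have hxm'' : x + 2 < m := by
      by_contra; exact hlast (by rwa [show m - 1 = x + 1 by omega])
    obtain ⟨y, rfl⟩ : ∃ y, m = x + y + 2 := ⟨m - x - 2, by omega⟩
    refine Or.inr (Or.inl (hasInducedT_of_paths hx (by omega) hr hp hq hne
      (fun i hi j hj => (hadj i hi j hj).trans (and_congr_left fun _ => ?_)) hpX hqX))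
    exact ⟨ht i hi, by rintro (rfl | rfl); exacts [htx, hx1]⟩
  · obtain ⟨y, rfl⟩ : ∃ y, m = x + y + 1 := ⟨m - x - 1, by omega⟩
    refine Or.inl (hasInducedS_of_paths hx (by omega) (by omega) hp hq hne
      (fun i hi j hj => (hadj i hi j hj).trans (and_congr ?_ (by omega))) hpX hqX)
    refine ⟨fun h => (ht i hi h).resolve_right ?_, by rintro rfl; exact htx⟩
    rintro rfl; exact hx1 h

theorem HangsFrom.hasInducedSTM_of_none_sees {S E : Set V} {a : V}
    (hP : G.IsShortestWalkIn S a E p m) (h : G.HangsFrom q r p m)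
    (ha : ∀ j < r, ¬ G.Adj (p 0) (q j)) (hb : ∀ j < r, ¬ G.Adj (p (m - 1)) (q j))
    (htS : 1 < r → q (r - 1) ∈ S) (hpX : ∀ i < m, p i ∈ X) (hqX : ∀ j < r, q j ∈ X) :
    G.HasInducedSTM X {p 0, p (m - 1), q 0} := by
  classical
  have hr := h.pos
  have hnear (i : ℕ) (hi : i < m) (j : ℕ) (hj : j + 1 < r) : ¬ G.Adj (p i) (q j) := by
    rcases Nat.eq_zero_or_pos i with rfl | hi0
    · exact ha j (by omega)
    rcases Nat.lt_or_ge (i + 1) m with him | him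
    · exact h.far i hi0 him j hj
    · rw [show i = m - 1 by omega]; exact hb j (by omega)
  have ht : ∃ x, G.Adj (p x) (q (r - 1)) := let ⟨x, _, _, hx⟩ := h.last; ⟨x, hx⟩
  set x := Nat.find ht
  have htx : G.Adj (p x) (q (r - 1)) := Nat.find_spec ht
  have hmin (i : ℕ) (hi : i < x) : ¬ G.Adj (p i) (q (r - 1)) := Nat.find_min ht hi
  have hx : 0 < x := Nat.pos_of_ne_zero fun h0 => ha (r - 1) (by omega) (h0 ▸ htx)
  have hxm : x < m :=
    let ⟨x₀, _, hx₀m, htx₀⟩ := h.last; (Nat.find_min' ht htx₀).trans_lt (by omega)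
  rcases Nat.lt_or_ge 1 r with hr1 | hr1
  swap
  · obtain rfl : r = 1 := by omega
    exact hasInducedSTM_of_pendant h.path_p (fun i hi => h.ne i hi 0 one_pos) (ha 0 one_pos)
      (hb 0 one_pos) hxm htx hpX (hqX 0 one_pos)
  obtain ⟨r, rfl⟩ : ∃ r', r = r' + 1 := ⟨r - 1, by omega⟩
  simp only [Nat.add_sub_cancel] at htx hmin htS
  by_cases hfar : ∃ j, x + 2 ≤ j ∧ j < m ∧ G.Adj (p j) (q r)
  · obtain ⟨j, hxj, hjm, hjt⟩ := hfar
    obtain rfl : j = x + 2 :=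
      le_antisymm (hP.le_add_two (htS hr1) htx hjt.symm (by omega) hjm) hxj
    exact Or.inl (hasInducedS_of_detour hP h.path_q (by omega) h.ne
      (fun i hi j hj => hnear i hi j (by omega)) (by omega) htx hjt.symm (htS hr1) hpX hqX)
  refine hasInducedSTM_of_consecutive h.path_p h.path_q (by omega) h.ne
    (fun i hi j hj => hnear i hi j (by omega)) hx hxm htx (fun i hi hit => ?_) (hb r (by omega))
    hpX hqX
  have := Nat.le_of_not_lt fun hix => hmin i hix hit
  have := Nat.lt_of_not_le fun hxi => hfar ⟨i, hxi, hi, hit⟩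
  omega

theorem HangsFrom.hasInducedSTM {S E : Set V} {a : V} (hP : G.IsShortestWalkIn S a E p m)
    (h : G.HangsFrom q r p m) (ha0 : ¬ G.Adj (p 0) (q 0)) (hb0 : ¬ G.Adj (p (m - 1)) (q 0))
    (htS : 1 < r → q (r - 1) ∈ S) (hpX : ∀ i < m, p i ∈ X) (hqX : ∀ j < r, q j ∈ X) :
    G.HasInducedSTM X {p 0, p (m - 1), q 0} := by
  classical
  obtain ⟨x, hx, hxm, -⟩ := h.last
  have hqa (j : ℕ) (hj : j < r) : q j ≠ p 0 := (h.ne 0 (by omega) j hj).symm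
  have hqb (j : ℕ) (hj : j < r) : q j ≠ p (m - 1) := (h.ne _ (by omega) j hj).symm
  have hba : p (m - 1) ≠ p 0 := fun e => by
    have := h.path_p.inj _ (by omega) _ (by omega) e; omega
  have hperm : ({q 0, p (m - 1), p 0} : Set V) = {p 0, p (m - 1), q 0} ∧
      ({q 0, p 0, p (m - 1)} : Set V) = {p 0, p (m - 1), q 0} := by
    constructor <;> ext <;> simp only [Set.mem_insert_iff, Set.mem_singleton_iff] <;> tauto
  by_cases ha : ∃ j < r, G.Adj (p 0) (q j) <;> by_cases hb : ∃ j < r, G.Adj (p (m - 1)) (q j)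
  · obtain ⟨hia, haia⟩ := Nat.find_spec ha
    obtain ⟨hib, hbib⟩ := Nat.find_spec hb
    rcases le_total (Nat.find ha) (Nat.find hb) with hab | hab
    · have := hasInducedSTM_of_both_see h.path_q hqa hqb hba h.not_adj_ends ha0 hib hbib
        (fun j hj hbj => Nat.find_min hb hj ⟨by omega, hbj⟩) hab haia hqX (hpX 0 (by omega))
        (hpX _ (by omega))
      rwa [hperm.1] at this
    · have := hasInducedSTM_of_both_see h.path_q hqb hqa hba.symm
        (fun e => h.not_adj_ends e.symm) hb0 hia haia
        (fun j hj haj => Nat.find_min ha hj ⟨by omega, haj⟩) hab hbib hqX (hpX _ (by omega))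
        (hpX 0 (by omega))
      rwa [hperm.2] at this
  · have := h.hasInducedSTM_of_one_sees ha0 ha (fun j hj hbj => hb ⟨j, hj, hbj⟩) hpX hqX
    rwa [hperm.1] at this
  · have := h.reverse.hasInducedSTM_of_one_sees (by rwa [Nat.sub_zero]) (by simpa using hb)
      (fun j hj haj => ha ⟨j, hj, by rwa [Nat.sub_self] at haj⟩)
      (fun i hi => hpX _ (by omega)) hqX
    simp only [Nat.sub_zero, Nat.sub_self] at this
    rwa [hperm.2] at this
  · exact h.hasInducedSTM_of_none_sees hP (fun j hj haj => ha ⟨j, hj, haj⟩)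
      (fun j hj hbj => hb ⟨j, hj, hbj⟩) htS hpX hqX

variable {s : Set V} {a b c : V}

def interiorNeighbors (G : SimpleGraph V) (p : ℕ → V) (m : ℕ) : Set V :=
  {v | ∃ i, 0 < i ∧ i + 1 < m ∧ G.Adj v (p i)}

theorem hangsFrom_of_isShortestWalkIn (hP : G.IsShortestWalkIn (s ∪ {a, b}) a {b} p m)
    (hQ : G.IsShortestWalkIn (s ∪ {c}) c (G.interiorNeighbors p m) q r)
    (has : a ∉ s) (hbs : b ∉ s) (hcs : c ∉ s) (hac : a ≠ c) (hbc : b ≠ c) :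
    G.HangsFrom q r p m := by
  have far (i : ℕ) (hi0 : 0 < i) (him : i + 1 < m) (j : ℕ) (hj : j + 1 < r) :
      ¬ G.Adj (p i) (q j) := fun h => hQ.not_mem hj ⟨i, hi0, him, h.symm⟩
  refine ⟨hP.isInducedPath, hQ.isInducedPath, hQ.pos, fun i hi j hj h => ?_, far, ?_⟩
  · rcases Nat.eq_zero_or_pos j with rfl | hj0
    · have := hP.mem i hi
      rw [h, hQ.head] at this
      rcases this with h' | h' | h'
      exacts [hcs h', hac h'.symm, hbc h'.symm]
    have hqj := hQ.mem_of_pos hj0 hj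
    rw [← h] at hqj
    have hi0 : 0 < i := Nat.pos_of_ne_zero fun hi0 => has (by rwa [hi0, hP.head] at hqj)
    have him : i + 1 < m := by
      by_contra
      exact hbs (by rwa [show i = m - 1 by omega, show p (m - 1) = b from hP.last] at hqj)
    refine far i hi0 him (j - 1) (by omega) ?_
    rw [h, show j = j - 1 + 1 by omega]
    exact (hQ.adj (j - 1) (by omega)).symm
  · obtain ⟨x, hx0, hxm, h⟩ := hQ.last
    exact ⟨x, hx0, hxm, h.symm⟩

theorem hasInducedSTM_of_isShortestWalkIn (hP : G.IsShortestWalkIn (s ∪ {a, b}) a {b} p m)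
    (hQ : G.IsShortestWalkIn (s ∪ {c}) c (G.interiorNeighbors p m) q r)
    (has : a ∉ s) (hbs : b ∉ s) (hcs : c ∉ s) (hac : a ≠ c) (hbc : b ≠ c)
    (hnac : ¬ G.Adj a c) (hnbc : ¬ G.Adj b c) (hX : s ∪ {a, b, c} ⊆ X) :
    G.HasInducedSTM X {a, b, c} := by
  have hpa : p 0 = a := hP.head
  have hpb : p (m - 1) = b := hP.last
  have hqc : q 0 = c := hQ.head
  have := (hangsFrom_of_isShortestWalkIn hP hQ has hbs hcs hac hbc).hasInducedSTM hP
    (by rwa [hpa, hqc]) (by rwa [hpb, hqc])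
    (fun hr => Or.inl (hQ.mem_of_pos (by omega) (by omega)))
    (fun i hi => hX (Set.union_subset_union_right s (by intro v; simp; tauto) (hP.mem i hi)))
    (fun j hj => hX (Set.union_subset_union_right s (by simp) (hQ.mem j hj)))
  rwa [hpa, hpb, hqc] at this

theorem exists_isWalkIn_of_adj {x u v : V} (h : (G.induce s).Connected) (hxu : G.Adj x u)
    (hu : u ∈ s) (hv : v ∈ s) : ∃ p n, G.IsWalkIn (s ∪ {x}) x {v} p n := by
  obtain ⟨w, n, hw⟩ := exists_isWalkIn_of_connected h hu hv
  exact ⟨_, _, (isWalkIn_single (S := s ∪ {x}) (x := x) (by simp) hxu).append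
    (hw.mono Set.subset_union_left le_rfl)⟩

theorem exists_isShortestWalkIn_through {u v : V} (h : (G.induce s).Connected)
    (hau : G.Adj a u) (hu : u ∈ s) (hbv : G.Adj b v) (hv : v ∈ s) :
    ∃ p m, G.IsShortestWalkIn (s ∪ {a, b}) a {b} p m := by
  obtain ⟨w, n, hw⟩ := exists_isWalkIn_of_adj h hau hu hv
  have hw' : G.IsWalkIn (s ∪ {a, b}) a {z | G.Adj z b} w n := by
    refine hw.mono (fun z hz => ?_) (by simpa using hbv.symm)
    simp only [Set.mem_union, Set.mem_insert_iff, Set.mem_singleton_iff] at hz ⊢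
    tauto
  exact exists_isShortestWalkIn ⟨_, _, hw'.append (isWalkIn_single (by simp) rfl)⟩

theorem exists_isShortestWalkIn_to_interior {w : V} (h : (G.induce s).Connected)
    (hP : G.IsShortestWalkIn (s ∪ {a, b}) a {b} p m) (hab : a ≠ b) (hnab : ¬ G.Adj a b)
    (hcs : c ∉ s) (hcw : G.Adj c w) (hw : w ∈ s) :
    ∃ q r, G.IsShortestWalkIn (s ∪ {c}) c (G.interiorNeighbors p m) q r := by
  have hm := hP.toIsWalkIn.two_lt hab hnab
  have hp1 : p 1 ∈ s := hP.mem_of_pos_of_lt one_pos (by omega)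
  obtain ⟨q, n, hq⟩ := exists_isWalkIn_of_adj h hcw hw hp1
  have hqn : q (n - 1) = p 1 := hq.last
  have hn : 1 < n := by
    by_contra
    exact hcs (by rw [← hq.head, show 0 = n - 1 by omega, hqn]; exact hp1)
  have hqp : q (n - 2) ∈ G.interiorNeighbors p m := by
    refine ⟨1, one_pos, by omega, ?_⟩
    rw [← hqn, show n - 1 = n - 2 + 1 by omega]
    exact hq.adj _ (by omega)
  exact exists_isShortestWalkIn ⟨_, _, hq.take (by omega) hqp⟩

end SimpleGraph

theorem stmt17_general {V : Type} (G : SimpleGraph V) (I : Finset V) (hI : I.card = 3)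
    (hind : ∀ a ∈ I, ∀ b ∈ I, a ≠ b → ¬ G.Adj a b)
    (s : Set V) (hdisj : ∀ v ∈ s, v ∉ I)
    (hconn : (G.induce s).Connected)
    (hNbr : ∀ v ∈ I, ∃ w ∈ s, G.Adj v w) :
    (∃ n : Fin 3 → ℕ, (∀ i, 1 ≤ n i) ∧
      ∃ e : spiderS n ↪g G,
        (∀ x, e x ∈ s ∪ {v : V | ∃ w ∈ s, G.Adj v w}) ∧
        (fun x => e x) '' {x | ∃ y : Σ i : Fin 3, Fin (n i),
            x = some y ∧ (y.2 : ℕ) + 1 = n y.1} = ↑I) ∨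
    (∃ n : Fin 3 → ℕ, (∀ i, 1 ≤ n i) ∧
      ∃ e : spiderT n ↪g G,
        (∀ x, e x ∈ s ∪ {v : V | ∃ w ∈ s, G.Adj v w}) ∧
        (fun x => e x) '' {x : Σ i : Fin 3, Fin (n i + 1) | (x.2 : ℕ) = n x.1} = ↑I) ∨
    (∃ (m : ℕ) (A : Finset (Fin m)), 2 ≤ A.card ∧
      (∀ j ∈ A, (j : ℕ) ≠ 0 ∧ (j : ℕ) + 1 ≠ m) ∧
      ∃ e : centerPath m A ↪g G,
        (∀ x, e x ∈ s ∪ {v : V | ∃ w ∈ s, G.Adj v w}) ∧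
        (fun x => e x) '' {x : Option (Fin m) | x = none ∨
            ∃ j : Fin m, x = some j ∧ ((j : ℕ) = 0 ∨ (j : ℕ) + 1 = m)} = ↑I) := by
  classical
  obtain ⟨a, b, c, hab, hac, hbc, rfl⟩ := Finset.card_eq_three.1 hI
  rw [Finset.coe_insert, Finset.coe_insert, Finset.coe_singleton]
  obtain ⟨wa, hwa, hawa⟩ := hNbr a (by simp)
  obtain ⟨wb, hwb, hbwb⟩ := hNbr b (by simp)
  obtain ⟨wc, hwc, hcwc⟩ := hNbr c (by simp)
  have has : a ∉ s := fun h => hdisj a h (by simp)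
  have hbs : b ∉ s := fun h => hdisj b h (by simp)
  have hcs : c ∉ s := fun h => hdisj c h (by simp)
  obtain ⟨p, m, hP⟩ := exists_isShortestWalkIn_through hconn hawa hwa hbwb hwb
  obtain ⟨q, r, hQ⟩ := exists_isShortestWalkIn_to_interior hconn hP hab
    (hind a (by simp) b (by simp) hab) hcs hcwc hwc
  refine hasInducedSTM_of_isShortestWalkIn hP hQ has hbs hcs hac hbc
    (hind a (by simp) c (by simp) hac) (hind b (by simp) c (by simp) hbc) ?_
  rintro v (hv | rfl | rfl | rfl)
  exacts [Or.inl hv, Or.inr ⟨wa, hwa, hawa⟩, Or.inr ⟨wb, hwb, hbwb⟩,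
    Or.inr ⟨wc, hwc, hcwc⟩]

/-- Lemma 1 of Dallard et al.: if `I` is an independent set of size `3` and `C = s` is a
connected component of `G − I` such that every vertex of `I` has a neighbor in `s`, then
`G[N[C]]` contains an induced subgraph `H ∈ 𝓢 ∪ 𝓣 ∪ 𝓜` whose extremities are exactly `I`. -/
theorem stmt17 {V : Type} (G : SimpleGraph V) (I : Finset V) (hI : I.card = 3)
    (hind : ∀ a ∈ I, ∀ b ∈ I, a ≠ b → ¬ G.Adj a b)
    (s : Set V) (hdisj : ∀ v ∈ s, v ∉ I)
    (hconn : (G.induce s).Connected)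
    (hclosed : ∀ v : V, v ∉ s → v ∉ I → ∀ w ∈ s, ¬ G.Adj v w)
    (hNbr : ∀ v ∈ I, ∃ w ∈ s, G.Adj v w) :
    (∃ n : Fin 3 → ℕ, (∀ i, 1 ≤ n i) ∧
      ∃ e : spiderS n ↪g G,
        (∀ x, e x ∈ s ∪ {v : V | ∃ w ∈ s, G.Adj v w}) ∧
        (fun x => e x) '' {x | ∃ y : Σ i : Fin 3, Fin (n i),
            x = some y ∧ (y.2 : ℕ) + 1 = n y.1} = ↑I) ∨
    (∃ n : Fin 3 → ℕ, (∀ i, 1 ≤ n i) ∧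
      ∃ e : spiderT n ↪g G,
        (∀ x, e x ∈ s ∪ {v : V | ∃ w ∈ s, G.Adj v w}) ∧
        (fun x => e x) '' {x : Σ i : Fin 3, Fin (n i + 1) | (x.2 : ℕ) = n x.1} = ↑I) ∨
    (∃ (m : ℕ) (A : Finset (Fin m)), 2 ≤ A.card ∧
      (∀ j ∈ A, (j : ℕ) ≠ 0 ∧ (j : ℕ) + 1 ≠ m) ∧
      ∃ e : centerPath m A ↪g G,
        (∀ x, e x ∈ s ∪ {v : V | ∃ w ∈ s, G.Adj v w}) ∧
        (fun x => e x) '' {x : Option (Fin m) | x = none ∨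
            ∃ j : Fin m, x = some j ∧ ((j : ℕ) = 0 ∨ (j : ℕ) + 1 = m)} = ↑I) :=
  stmt17_general G I hI hind s hdisj hconn hNbr
end
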